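/- arXiv:1205.1320 — 6 statements merged into one kernel-verified Lean document; each statement's English description precedes it below -/
import Mathlib

section
/- Let A be an N×N irreducible {0,1}-matrix satisfying condition (I), and let X_A be the one-sided shift space. For any nonempty open sets U, Y ⊆ X_A and any point x ∈ U, there exist a clopen set V with x ∈ V ⊆ U and a homeomorphism α in the continuous full group Γ_A such that α(V) ⊆ Y, α² = id, and α is the identity outside V ∪ α(V). -/
open Set

instance homeoGroup {α : Type*} [TopologicalSpace α] : Group (α ≃ₜ α) where
  mul a b := b.trans a
  one := Homeomorph.refl α
  inv := Homeomorph.symm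
  mul_assoc _ _ _ := Homeomorph.ext fun _ => rfl
  one_mul _ := Homeomorph.ext fun _ => rfl
  mul_one _ := Homeomorph.ext fun _ => rfl
  inv_mul_cancel a := Homeomorph.ext fun x => a.symm_apply_apply x

@[simp] theorem homeo_mul_apply {α : Type*} [TopologicalSpace α] (a b : α ≃ₜ α) (x : α) :
    (a * b) x = a (b x) := rfl

@[simp] theorem homeo_inv_apply {α : Type*} [TopologicalSpace α] (a : α ≃ₜ α) (x : α) :
    a⁻¹ x = a.symm x := rfl

/-- The one-sided shift space `X_A` of a 0-1 matrix `A`. -/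
abbrev ShiftSpace {N : ℕ} (A : Fin N → Fin N → Bool) : Type :=
  {x : ℕ → Fin N // ∀ n, A (x n) (x (n + 1)) = true}

/-- The one-sided shift `σ_A`. -/
def shiftMap {N : ℕ} (A : Fin N → Fin N → Bool) (x : ShiftSpace A) : ShiftSpace A :=
  ⟨fun n => x.1 (n + 1), fun n => x.2 (n + 1)⟩

/-- Irreducibility of the matrix `A`: any two indices are connected by a path. -/
def MatrixIrreducible {N : ℕ} (A : Fin N → Fin N → Bool) : Prop :=
  ∀ i j : Fin N, ∃ n : ℕ, 0 < n ∧ ∃ w : ℕ → Fin N, w 0 = i ∧ w n = j ∧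
    ∀ k < n, A (w k) (w (k + 1)) = true

/-- Condition (I): the shift space is homeomorphic to the Cantor set. -/
def ConditionI {N : ℕ} (A : Fin N → Fin N → Bool) : Prop :=
  Nonempty (ShiftSpace A ≃ₜ (ℕ → Bool))

/-- The continuous full group `Γ_A`. -/
def fullGroup {N : ℕ} (A : Fin N → Fin N → Bool) :
    Subgroup (ShiftSpace A ≃ₜ ShiftSpace A) where
  carrier := {τ | ∃ k l : ShiftSpace A → ℕ, Continuous k ∧ Continuous l ∧
    ∀ x, (shiftMap A)^[k x] (τ x) = (shiftMap A)^[l x] x}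
  one_mem' := ⟨fun _ => 0, fun _ => 0, continuous_const, continuous_const, fun _ => rfl⟩
  mul_mem' := by
    rintro a b ⟨k1, l1, hk1, hl1, h1⟩ ⟨k2, l2, hk2, hl2, h2⟩
    refine ⟨fun x => k2 x + k1 (b x), fun x => l1 (b x) + l2 x,
      hk2.add (hk1.comp b.continuous), (hl1.comp b.continuous).add hl2, fun x => ?_⟩
    calc (shiftMap A)^[k2 x + k1 (b x)] ((a * b) x)
        = (shiftMap A)^[k2 x] ((shiftMap A)^[k1 (b x)] (a (b x))) :=
          Function.iterate_add_apply _ _ _ _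
      _ = (shiftMap A)^[k2 x] ((shiftMap A)^[l1 (b x)] (b x)) := by rw [h1]
      _ = (shiftMap A)^[l1 (b x)] ((shiftMap A)^[k2 x] (b x)) := by
          rw [← Function.iterate_add_apply, Nat.add_comm, Function.iterate_add_apply]
      _ = (shiftMap A)^[l1 (b x)] ((shiftMap A)^[l2 x] x) := by rw [h2]
      _ = (shiftMap A)^[l1 (b x) + l2 x] x := (Function.iterate_add_apply _ _ _ _).symm
  inv_mem' := by
    rintro a ⟨k, l, hk, hl, h⟩
    refine ⟨fun x => l (a⁻¹ x), fun x => k (a⁻¹ x),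
      hl.comp a.symm.continuous, hk.comp a.symm.continuous, fun x => ?_⟩
    have := (h (a⁻¹ x)).symm
    rwa [show a (a⁻¹ x) = x from a.apply_symm_apply x] at this

/-- The local subgroup `Γ_O` of `Γ_A` associated to a set `O`. -/
def localGroup {N : ℕ} (A : Fin N → Fin N → Bool) (O : Set (ShiftSpace A)) :
    Subgroup (ShiftSpace A ≃ₜ ShiftSpace A) where
  carrier := {γ | γ ∈ fullGroup A ∧ ∀ x ∉ O, γ x = x}
  one_mem' := ⟨(fullGroup A).one_mem, fun _ _ => rfl⟩
  mul_mem' := by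
    rintro a b ⟨haΓ, ha⟩ ⟨hbΓ, hb⟩
    exact ⟨mul_mem haΓ hbΓ, fun x hx => by
      show a (b x) = x
      rw [hb x hx, ha x hx]⟩
  inv_mem' := by
    rintro a ⟨haΓ, ha⟩
    refine ⟨inv_mem haΓ, fun x hx => ?_⟩
    conv_lhs => rw [← ha x hx]
    exact a.symm_apply_apply x

/-- The commutant in `Γ_A` of a set of homeomorphisms. -/
def commutant {N : ℕ} (A : Fin N → Fin N → Bool)
    (S : Set (ShiftSpace A ≃ₜ ShiftSpace A)) : Set (ShiftSpace A ≃ₜ ShiftSpace A) :=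
  {ξ | ξ ∈ fullGroup A ∧ ∀ γ ∈ S, ξ * γ = γ * ξ}

/-- The support `P_γ` of a homeomorphism `γ`. -/
def suppHomeo {N : ℕ} {A : Fin N → Fin N → Bool} (γ : ShiftSpace A ≃ₜ ShiftSpace A) :
    Set (ShiftSpace A) :=
  closure {x | γ x ≠ x}

/-- The support `P_H` of a set of homeomorphisms. -/
def suppSet {N : ℕ} {A : Fin N → Fin N → Bool} (H : Set (ShiftSpace A ≃ₜ ShiftSpace A)) :
    Set (ShiftSpace A) :=
  closure (⋃ η ∈ H, interior (suppHomeo η))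


section Aux

lemma isClopen_cyl {N : ℕ} {A : Fin N → Fin N → Bool} (u : ℕ → Fin N) (a : ℕ) :
    IsClopen {z : ShiftSpace A | ∀ i ≤ a, z.1 i = u i} := by
  have h : {z : ShiftSpace A | ∀ i ≤ a, z.1 i = u i}
      = ⋂ i ∈ Finset.range (a + 1), (fun z : ShiftSpace A => z.1 i) ⁻¹' {u i} := by
    ext z
    simp [Nat.lt_succ_iff]
  rw [h]
  exact isClopen_biInter_finset fun i _ =>
    (isClopen_discrete _).preimage ((continuous_apply i).comp continuous_subtype_val)

lemma shift_iter {N : ℕ} {A : Fin N → Fin N → Bool} (z : ShiftSpace A) (m n : ℕ) :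
    ((shiftMap A)^[m] z).1 n = z.1 (n + m) := by
  induction m generalizing z with
  | zero => rfl
  | succ m ih =>
    rw [Function.iterate_succ_apply, ih]
    rfl

lemma cyl_basis {N : ℕ} {A : Fin N → Fin N → Bool} {O : Set (ShiftSpace A)}
    (hO : IsOpen O) {x : ShiftSpace A} (hx : x ∈ O) :
    ∃ m : ℕ, ∀ z : ShiftSpace A, (∀ i ≤ m, z.1 i = x.1 i) → z ∈ O := by
  rw [isOpen_induced_iff] at hO
  obtain ⟨t, ht, rfl⟩ := hO
  have hmem : t ∈ nhds x.1 := ht.mem_nhds hx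
  rw [nhds_pi, Filter.mem_pi] at hmem
  obtain ⟨I, hI, s, hs, hsub⟩ := hmem
  obtain ⟨m, hm⟩ := hI.bddAbove
  refine ⟨m, fun z hz => hsub fun i hi => ?_⟩
  rw [hz i (hm hi)]
  exact mem_of_mem_nhds (hs i)

end Aux
open Classical in
/-- The prefix-swap map: exchanges the cylinder determined by `u.1 0..a` with the
cylinder determined by `v.1 0..b` (underlying function level). -/
noncomputable def swapF {N : ℕ} (A : Fin N → Fin N → Bool) (u v : ShiftSpace A)
    (a b : ℕ) : ShiftSpace A → ℕ → Fin N := fun z =>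
  if ∀ i ≤ a, z.1 i = u.1 i then fun n => if n ≤ b then v.1 n else z.1 (n - b + a)
  else if ∀ i ≤ b, z.1 i = v.1 i then fun n => if n ≤ a then u.1 n else z.1 (n - a + b)
  else z.1

lemma swapF_u {N : ℕ} (A : Fin N → Fin N → Bool) (u v : ShiftSpace A) (a b : ℕ)
    (z : ShiftSpace A) (hz : ∀ i ≤ a, z.1 i = u.1 i) :
    swapF A u v a b z = fun n => if n ≤ b then v.1 n else z.1 (n - b + a) := by
  simp only [swapF]
  rw [if_pos hz]

lemma swapF_v {N : ℕ} (A : Fin N → Fin N → Bool) (u v : ShiftSpace A) (a b : ℕ)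
    (z : ShiftSpace A) (hz' : ¬ ∀ i ≤ a, z.1 i = u.1 i) (hz : ∀ i ≤ b, z.1 i = v.1 i) :
    swapF A u v a b z = fun n => if n ≤ a then u.1 n else z.1 (n - a + b) := by
  simp only [swapF]
  rw [if_neg hz', if_pos hz]

lemma swapF_o {N : ℕ} (A : Fin N → Fin N → Bool) (u v : ShiftSpace A) (a b : ℕ)
    (z : ShiftSpace A) (hz1 : ¬ ∀ i ≤ a, z.1 i = u.1 i) (hz2 : ¬ ∀ i ≤ b, z.1 i = v.1 i) :
    swapF A u v a b z = z.1 := by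
  simp only [swapF]
  rw [if_neg hz1, if_neg hz2]

lemma swapF_adm {N : ℕ} (A : Fin N → Fin N → Bool) (u v : ShiftSpace A) (a b : ℕ)
    (hend : u.1 a = v.1 b) (z : ShiftSpace A) (n : ℕ) :
    A (swapF A u v a b z n) (swapF A u v a b z (n + 1)) = true := by
  by_cases hzu : ∀ i ≤ a, z.1 i = u.1 i
  · rw [swapF_u A u v a b z hzu]
    beta_reduce
    by_cases h1 : n + 1 ≤ b
    · rw [if_pos (by omega : n ≤ b), if_pos h1]
      exact v.2 n
    · by_cases h2 : n ≤ b
      · have hnb : n = b := by omega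
        rw [if_pos h2, if_neg h1]
        have h3 : n + 1 - b + a = a + 1 := by omega
        rw [h3, hnb, ← hend, ← hzu a le_rfl]
        exact z.2 a
      · rw [if_neg h2, if_neg h1]
        have h3 : n + 1 - b + a = (n - b + a) + 1 := by omega
        rw [h3]
        exact z.2 _
  · by_cases hzv : ∀ i ≤ b, z.1 i = v.1 i
    · rw [swapF_v A u v a b z hzu hzv]
      beta_reduce
      by_cases h1 : n + 1 ≤ a
      · rw [if_pos (by omega : n ≤ a), if_pos h1]
        exact u.2 n
      · by_cases h2 : n ≤ a
        · have hna : n = a := by omega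
          rw [if_pos h2, if_neg h1]
          have h3 : n + 1 - a + b = b + 1 := by omega
          rw [h3, hna, hend, ← hzv b le_rfl]
          exact z.2 b
        · rw [if_neg h2, if_neg h1]
          have h3 : n + 1 - a + b = (n - a + b) + 1 := by omega
          rw [h3]
          exact z.2 _
    · rw [swapF_o A u v a b z hzu hzv]
      exact z.2 n

lemma swapF_cont {N : ℕ} (A : Fin N → Fin N → Bool) (u v : ShiftSpace A) (a b : ℕ) :
    Continuous (swapF A u v a b) := by
  have hu : IsClopen {z : ShiftSpace A | ∀ i ≤ a, z.1 i = u.1 i} := isClopen_cyl _ _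
  have hv : IsClopen {z : ShiftSpace A | ∀ i ≤ b, z.1 i = v.1 i} := isClopen_cyl _ _
  have c1 : Continuous fun z : ShiftSpace A =>
      (fun n => if n ≤ b then v.1 n else z.1 (n - b + a) : ℕ → Fin N) := by
    apply continuous_pi
    intro n
    by_cases h : n ≤ b
    · simp only [if_pos h]; exact continuous_const
    · simp only [if_neg h]; exact (continuous_apply _).comp continuous_subtype_val
  have c2 : Continuous fun z : ShiftSpace A =>
      (fun n => if n ≤ a then u.1 n else z.1 (n - a + b) : ℕ → Fin N) := by
    apply continuous_pi
    intro n
    by_cases h : n ≤ a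
    · simp only [if_pos h]; exact continuous_const
    · simp only [if_neg h]; exact (continuous_apply _).comp continuous_subtype_val
  unfold swapF
  apply Continuous.if
  · intro z hz
    rw [hu.frontier_eq] at hz
    exact absurd hz (Set.notMem_empty z)
  · exact c1
  · apply Continuous.if
    · intro z hz
      rw [hv.frontier_eq] at hz
      exact absurd hz (Set.notMem_empty z)
    · exact c2
    · exact continuous_subtype_val
lemma swap_lemma {N : ℕ} (A : Fin N → Fin N → Bool) (u v : ShiftSpace A) (a b : ℕ)
    (hend : u.1 a = v.1 b) (i0 : ℕ) (hi0a : i0 ≤ a) (hi0b : i0 ≤ b)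
    (hne : u.1 i0 ≠ v.1 i0) :
    ∃ α ∈ fullGroup A,
      (∀ z : ShiftSpace A, (∀ i ≤ a, z.1 i = u.1 i) → ∀ i ≤ b, (α z).1 i = v.1 i) ∧
      (∀ z : ShiftSpace A, (∀ i ≤ b, z.1 i = v.1 i) → ∀ i ≤ a, (α z).1 i = u.1 i) ∧
      α * α = 1 ∧
      (∀ z : ShiftSpace A, (¬ ∀ i ≤ a, z.1 i = u.1 i) → (¬ ∀ i ≤ b, z.1 i = v.1 i) →
        α z = z) := by
  classical
  have hdisj : ∀ z : ShiftSpace A, (∀ i ≤ a, z.1 i = u.1 i) →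
      ¬ ∀ i ≤ b, z.1 i = v.1 i := fun z hu hv =>
    hne (((hu i0 hi0a).symm).trans (hv i0 hi0b))
  set f : ShiftSpace A → ShiftSpace A :=
    fun z => ⟨swapF A u v a b z, swapF_adm A u v a b hend z⟩ with hf
  -- mapping properties
  have hmapu : ∀ z : ShiftSpace A, (∀ i ≤ a, z.1 i = u.1 i) →
      ∀ i ≤ b, (f z).1 i = v.1 i := by
    intro z hz i hib
    show swapF A u v a b z i = v.1 i
    rw [swapF_u A u v a b z hz]
    beta_reduce
    rw [if_pos hib]
  have hmapv : ∀ z : ShiftSpace A, (∀ i ≤ b, z.1 i = v.1 i) →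
      ∀ i ≤ a, (f z).1 i = u.1 i := by
    intro z hz i hia
    by_cases hzu : ∀ i ≤ a, z.1 i = u.1 i
    · exact absurd hz (hdisj z hzu)
    · show swapF A u v a b z i = u.1 i
      rw [swapF_v A u v a b z hzu hz]
      beta_reduce
      rw [if_pos hia]
  have hout : ∀ z : ShiftSpace A, (¬ ∀ i ≤ a, z.1 i = u.1 i) →
      (¬ ∀ i ≤ b, z.1 i = v.1 i) → f z = z := by
    intro z h1 h2
    exact Subtype.ext (swapF_o A u v a b z h1 h2)
  -- involution
  have hinvol : ∀ z, f (f z) = z := by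
    intro z
    by_cases hzu : ∀ i ≤ a, z.1 i = u.1 i
    · have h1 := hmapu z hzu
      have h2 : ¬ ∀ i ≤ a, (f z).1 i = u.1 i := fun h => hdisj (f z) h h1
      apply Subtype.ext
      funext n
      show swapF A u v a b (f z) n = z.1 n
      rw [swapF_v A u v a b (f z) h2 h1]
      beta_reduce
      by_cases hna : n ≤ a
      · rw [if_pos hna]
        exact (hzu n hna).symm
      · rw [if_neg hna]
        show swapF A u v a b z (n - a + b) = z.1 n
        rw [swapF_u A u v a b z hzu]
        beta_reduce
        rw [if_neg (by omega : ¬ n - a + b ≤ b)]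
        have he : n - a + b - b + a = n := by omega
        rw [he]
    · by_cases hzv : ∀ i ≤ b, z.1 i = v.1 i
      · have h1 := hmapv z hzv
        apply Subtype.ext
        funext n
        show swapF A u v a b (f z) n = z.1 n
        rw [swapF_u A u v a b (f z) h1]
        beta_reduce
        by_cases hnb : n ≤ b
        · rw [if_pos hnb]
          exact (hzv n hnb).symm
        · rw [if_neg hnb]
          show swapF A u v a b z (n - b + a) = z.1 n
          rw [swapF_v A u v a b z hzu hzv]
          beta_reduce
          rw [if_neg (by omega : ¬ n - b + a ≤ a)]
          have he : n - b + a - a + b = n := by omega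
          rw [he]
      · rw [hout z hzu hzv, hout z hzu hzv]
  have hcont : Continuous f :=
    Continuous.subtype_mk (swapF_cont A u v a b) _
  set α : ShiftSpace A ≃ₜ ShiftSpace A :=
    ⟨⟨f, f, hinvol, hinvol⟩, hcont, hcont⟩ with hα
  have hαapp : ∀ z, α z = f z := fun z => rfl
  refine ⟨α, ?_, ?_, ?_, ?_, ?_⟩
  · -- membership in the full group
    refine ⟨fun z => if ∀ i ≤ a, z.1 i = u.1 i then b + 1
        else if ∀ i ≤ b, z.1 i = v.1 i then a + 1 else 0,
      fun z => if ∀ i ≤ a, z.1 i = u.1 i then a + 1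
        else if ∀ i ≤ b, z.1 i = v.1 i then b + 1 else 0, ?_, ?_, ?_⟩
    · apply Continuous.if
      · intro z hz
        rw [(isClopen_cyl (A := A) u.1 a).frontier_eq] at hz
        exact absurd hz (Set.notMem_empty z)
      · exact continuous_const
      · apply Continuous.if
        · intro z hz
          rw [(isClopen_cyl (A := A) v.1 b).frontier_eq] at hz
          exact absurd hz (Set.notMem_empty z)
        · exact continuous_const
        · exact continuous_const
    · apply Continuous.if
      · intro z hz
        rw [(isClopen_cyl (A := A) u.1 a).frontier_eq] at hz
        exact absurd hz (Set.notMem_empty z)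
      · exact continuous_const
      · apply Continuous.if
        · intro z hz
          rw [(isClopen_cyl (A := A) v.1 b).frontier_eq] at hz
          exact absurd hz (Set.notMem_empty z)
        · exact continuous_const
        · exact continuous_const
    · intro z
      beta_reduce
      by_cases hzu : ∀ i ≤ a, z.1 i = u.1 i
      · rw [if_pos hzu, if_pos hzu]
        apply Subtype.ext
        funext n
        rw [shift_iter, shift_iter]
        show swapF A u v a b z (n + (b + 1)) = z.1 (n + (a + 1))
        rw [swapF_u A u v a b z hzu]
        beta_reduce
        rw [if_neg (by omega : ¬ n + (b + 1) ≤ b)]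
        have he : n + (b + 1) - b + a = n + (a + 1) := by omega
        rw [he]
      · by_cases hzv : ∀ i ≤ b, z.1 i = v.1 i
        · rw [if_neg hzu, if_pos hzv, if_neg hzu, if_pos hzv]
          apply Subtype.ext
          funext n
          rw [shift_iter, shift_iter]
          show swapF A u v a b z (n + (a + 1)) = z.1 (n + (b + 1))
          rw [swapF_v A u v a b z hzu hzv]
          beta_reduce
          rw [if_neg (by omega : ¬ n + (a + 1) ≤ a)]
          have he : n + (a + 1) - a + b = n + (b + 1) := by omega
          rw [he]
        · rw [if_neg hzu, if_neg hzv, if_neg hzu, if_neg hzv]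
          show (shiftMap A)^[0] (α z) = (shiftMap A)^[0] z
          simp only [Function.iterate_zero, id]
          rw [hαapp]
          exact hout z hzu hzv
  · exact hmapu
  · exact hmapv
  · exact Homeomorph.ext fun z => hinvol z
  · intro z h1 h2
    rw [hαapp]
    exact hout z h1 h2
lemma glue_exists {N : ℕ} {A : Fin N → Fin N → Bool} (hA : MatrixIrreducible A)
    (y x : ShiftSpace A) (k : ℕ) :
    ∃ (d : ℕ) (w : ShiftSpace A), k ≤ d ∧ (∀ i ≤ k, w.1 i = y.1 i) ∧
      (∀ i, w.1 (d + i) = x.1 i) := by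
  obtain ⟨n0, hn0, c, hc0, hcn, hcedge⟩ := hA (y.1 k) (x.1 0)
  set wf : ℕ → Fin N := fun i =>
    if i ≤ k then y.1 i else if i ≤ k + n0 then c (i - k) else x.1 (i - (k + n0)) with hwf
  have hwadm : ∀ n, A (wf n) (wf (n + 1)) = true := by
    intro n
    by_cases h1 : n + 1 ≤ k
    · simp only [hwf]
      rw [if_pos (by omega : n ≤ k), if_pos h1]
      exact y.2 n
    · by_cases h2 : n ≤ k
      · have hnk : n = k := by omega
        simp only [hwf]
        rw [if_pos h2, if_neg h1, if_pos (by omega : n + 1 ≤ k + n0)]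
        have he : n + 1 - k = 1 := by omega
        rw [he, hnk, ← hc0]
        exact hcedge 0 hn0
      · by_cases h3 : n + 1 ≤ k + n0
        · simp only [hwf]
          rw [if_neg h2, if_pos (by omega : n ≤ k + n0), if_neg h1, if_pos h3]
          have he : n + 1 - k = (n - k) + 1 := by omega
          rw [he]
          exact hcedge (n - k) (by omega)
        · by_cases h4 : n ≤ k + n0
          · simp only [hwf]
            rw [if_neg h2, if_pos h4, if_neg h1, if_neg h3]
            have e1 : n - k = n0 := by omega
            have e2 : n + 1 - (k + n0) = 1 := by omega
            rw [e1, e2, hcn]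
            exact x.2 0
          · simp only [hwf]
            rw [if_neg h2, if_neg h4, if_neg h1, if_neg (by omega : ¬ n + 1 ≤ k + n0)]
            have he : n + 1 - (k + n0) = (n - (k + n0)) + 1 := by omega
            rw [he]
            exact x.2 _
  refine ⟨k + n0, ⟨wf, hwadm⟩, by omega, ?_, ?_⟩
  · intro i hi
    show wf i = y.1 i
    simp only [hwf]
    rw [if_pos hi]
  · intro i
    show wf (k + n0 + i) = x.1 i
    simp only [hwf]
    by_cases hi : i = 0
    · subst hi
      rw [if_neg (by omega), if_pos (by omega)]
      have he : k + n0 + 0 - k = n0 := by omega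
      rw [he, hcn]
    · rw [if_neg (by omega : ¬ k + n0 + i ≤ k), if_neg (by omega : ¬ k + n0 + i ≤ k + n0)]
      have he : k + n0 + i - (k + n0) = i := by omega
      rw [he]
theorem stmt0 {N : ℕ} (hN : 1 < N) (A : Fin N → Fin N → Bool)
    (hA : MatrixIrreducible A) (hI : ConditionI A)
    (U Y : Set (ShiftSpace A)) (hU : IsOpen U) (hUne : U.Nonempty)
    (hY : IsOpen Y) (hYne : Y.Nonempty)
    (x : ShiftSpace A) (hx : x ∈ U) :
    ∃ V : Set (ShiftSpace A), IsClopen V ∧ x ∈ V ∧ V ⊆ U ∧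
      ∃ α ∈ fullGroup A, α '' V ⊆ Y ∧ α * α = 1 ∧
        ∀ y ∉ V ∪ α '' V, α y = y := by
  obtain ⟨y, hy⟩ := hYne
  obtain ⟨m0, hm0⟩ := cyl_basis hU hx
  obtain ⟨k, hk⟩ := cyl_basis hY hy
  obtain ⟨d, w, hkd, hwk, hwd⟩ := glue_exists hA y x k
  by_cases hcase : ∀ i, x.1 i = w.1 i
  · -- `x` itself lies in a cylinder contained in `Y`; take `α = 1`.
    refine ⟨{z | ∀ i ≤ max m0 k, z.1 i = x.1 i}, isClopen_cyl x.1 _,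
      fun i _ => rfl, ?_, 1, (fullGroup A).one_mem, ?_, mul_one 1, fun z _ => rfl⟩
    · intro z hz
      exact hm0 z fun i hi => hz i (le_trans hi (le_max_left _ _))
    · rintro _ ⟨z, hz, rfl⟩
      show (1 : ShiftSpace A ≃ₜ ShiftSpace A) z ∈ Y
      have h1 : (1 : ShiftSpace A ≃ₜ ShiftSpace A) z = z := rfl
      rw [h1]
      apply hk
      intro i hik
      rw [hz i (le_trans hik (le_max_right _ _)), hcase i]
      exact hwk i hik
  · push_neg at hcase
    obtain ⟨i0, hi0⟩ := hcase
    have hi0a : i0 ≤ max m0 i0 := le_max_right _ _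
    have hend : x.1 (max m0 i0) = w.1 (d + max m0 i0) := (hwd (max m0 i0)).symm
    obtain ⟨α, hαΓ, hmap1, hmap2, hinv, hid⟩ :=
      swap_lemma A x w (max m0 i0) (d + max m0 i0) hend i0 hi0a
        (le_trans hi0a (Nat.le_add_left _ d)) hi0
    refine ⟨{z | ∀ i ≤ max m0 i0, z.1 i = x.1 i}, isClopen_cyl x.1 _,
      fun i _ => rfl, ?_, α, hαΓ, ?_, hinv, ?_⟩
    · intro z hz
      exact hm0 z fun i hi => hz i (le_trans hi (le_max_left _ _))
    · rintro _ ⟨z, hz, rfl⟩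
      apply hk
      intro i hik
      have hib : i ≤ d + max m0 i0 := le_trans (le_trans hik hkd) (Nat.le_add_right d _)
      rw [hmap1 z hz i hib]
      exact hwk i hik
    · intro z hz
      have h1 : ¬ ∀ i ≤ max m0 i0, z.1 i = x.1 i := fun h => hz (Or.inl h)
      have h2 : ¬ ∀ i ≤ d + max m0 i0, z.1 i = w.1 i := by
        intro h
        apply hz
        right
        have h3 : α (α z) = z := by
          have h4 := congrArg (fun γ : ShiftSpace A ≃ₜ ShiftSpace A => γ z) hinv
          simpa using h4
        exact ⟨α z, hmap2 z h, h3⟩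
      exact hid z h1 h2
end

section
/- Let U, V be nonempty disjoint clopen subsets of X_A. If there exists γ ∈ Γ_A with γ(U) = V, then there exists α ∈ Γ_A such that α(U) = V, α² = id, and α is the identity on the complement of U ∪ V. -/
open Set

theorem stmt1 {N : ℕ} (hN : 1 < N) (A : Fin N → Fin N → Bool)
    (hA : MatrixIrreducible A) (hI : ConditionI A)
    (U V : Set (ShiftSpace A)) (hU : IsClopen U) (hV : IsClopen V)
    (hUne : U.Nonempty) (hVne : V.Nonempty) (hdisj : Disjoint U V)
    (γ : ShiftSpace A ≃ₜ ShiftSpace A) (hγ : γ ∈ fullGroup A) (hγU : γ '' U = V) :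
    ∃ α ∈ fullGroup A, α '' U = V ∧ α * α = 1 ∧ ∀ x ∉ U ∪ V, α x = x := by

  classical
  obtain ⟨k, l, hk, hl, hco⟩ := hγ
  have hUV : ∀ x ∈ U, γ x ∈ V := fun x hx => hγU ▸ Set.mem_image_of_mem γ hx
  have hsymmV : ∀ x ∈ V, γ.symm x ∈ U := by
    intro x hx
    rw [← hγU] at hx
    obtain ⟨y, hy, rfl⟩ := hx
    simpa using hy
  set f : ShiftSpace A → ShiftSpace A :=
    U.piecewise γ (V.piecewise γ.symm id) with hfdef
  have hfU : ∀ x ∈ U, f x = γ x := fun x hx => Set.piecewise_eq_of_mem _ _ _ hx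
  have hfV : ∀ x, x ∉ U → x ∈ V → f x = γ.symm x := by
    intro x hx hx'
    simp [hfdef, Set.piecewise, hx, hx']
  have hfO : ∀ x, x ∉ U → x ∉ V → f x = x := by
    intro x hx hx'
    simp [hfdef, Set.piecewise, hx, hx']
  have hcont : Continuous f := by
    refine Continuous.piecewise ?_ γ.continuous (Continuous.piecewise ?_ γ.symm.continuous continuous_id)
    · intro a ha; rw [hU.frontier_eq] at ha; exact absurd ha (Set.notMem_empty a)
    · intro a ha; rw [hV.frontier_eq] at ha; exact absurd ha (Set.notMem_empty a)
  have hinv : ∀ x, f (f x) = x := by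
    intro x
    by_cases hx : x ∈ U
    · have h1 : γ x ∈ V := hUV x hx
      have h2 : γ x ∉ U := Set.disjoint_right.mp hdisj h1
      rw [hfU x hx, hfV _ h2 h1, γ.symm_apply_apply]
    · by_cases hx' : x ∈ V
      · have h1 : γ.symm x ∈ U := hsymmV x hx'
        rw [hfV x hx hx', hfU _ h1, γ.apply_symm_apply]
      · rw [hfO x hx hx', hfO x hx hx']
  refine ⟨⟨⟨f, f, hinv, hinv⟩, hcont, hcont⟩, ?_, ?_, ?_, ?_⟩
  · refine ⟨fun x => if x ∈ U then k x else if x ∈ V then l (γ.symm x) else 0,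
      fun x => if x ∈ U then l x else if x ∈ V then k (γ.symm x) else 0, ?_, ?_, ?_⟩
    · refine Continuous.if ?_ hk (Continuous.if ?_ (hl.comp γ.symm.continuous) continuous_const)
      · intro a ha; rw [Set.setOf_mem_eq, hU.frontier_eq] at ha; exact absurd ha (Set.notMem_empty a)
      · intro a ha; rw [Set.setOf_mem_eq, hV.frontier_eq] at ha; exact absurd ha (Set.notMem_empty a)
    · refine Continuous.if ?_ hl (Continuous.if ?_ (hk.comp γ.symm.continuous) continuous_const)
      · intro a ha; rw [Set.setOf_mem_eq, hU.frontier_eq] at ha; exact absurd ha (Set.notMem_empty a)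
      · intro a ha; rw [Set.setOf_mem_eq, hV.frontier_eq] at ha; exact absurd ha (Set.notMem_empty a)
    · intro x
      show (shiftMap A)^[_] (f x) = _
      by_cases hx : x ∈ U
      · simp only [hx, if_true]
        rw [hfU x hx]; exact hco x
      · by_cases hx' : x ∈ V
        · simp only [hx, hx', if_false, if_true]
          rw [hfV x hx hx']
          have := hco (γ.symm x)
          rw [γ.apply_symm_apply] at this
          exact this.symm
        · simp only [hx, hx', if_false]
          rw [hfO x hx hx']
  · show f '' U = V
    rw [Set.image_congr hfU, hγU]
  · refine Homeomorph.ext fun x => ?_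
    exact hinv x
  · intro x hx
    rw [Set.mem_union] at hx
    push_neg at hx
    exact hfO x hx.1 hx.2
end

section
/- Let O be a nonempty open subset of X_A and let Γ_O = {γ ∈ Γ_A : γ(x) = x for all x ∉ O}. Then there is no regular Borel probability measure μ on O that is invariant under every element of Γ_O. -/
open Set

namespace Stmt3Aux

attribute [local instance] Classical.propDecidable

variable {N : ℕ} {A : Fin N → Fin N → Bool}

/-- The cylinder of depth `n` around a point `z`. -/
def cyl (z : ShiftSpace A) (n : ℕ) : Set (ShiftSpace A) := {x | ∀ i < n, x.1 i = z.1 i}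

lemma mem_cyl_self (z : ShiftSpace A) (n : ℕ) : z ∈ cyl z n := fun _ _ => rfl

lemma cyl_mono {z : ShiftSpace A} {m n : ℕ} (h : m ≤ n) : cyl z n ⊆ cyl z m :=
  fun _ hx i hi => hx i (lt_of_lt_of_le hi h)

lemma cyl_eq_of_agree {z z' : ShiftSpace A} {n : ℕ} (h : ∀ i < n, z'.1 i = z.1 i) :
    cyl z' n = cyl z n := by
  ext x
  constructor <;> intro hx i hi
  · rw [hx i hi, h i hi]
  · rw [hx i hi, h i hi]

lemma cyl_disjoint {z w : ShiftSpace A} {n d : ℕ} (hd : d < n) (h : z.1 d ≠ w.1 d) :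
    cyl z n ∩ cyl w n = ∅ := by
  ext x
  simp only [Set.mem_inter_iff, Set.mem_empty_iff_false, iff_false]
  rintro ⟨h1, h2⟩
  exact h ((h1 d hd).symm.trans (h2 d hd))

lemma inter_empty_mono {α : Type*} {s s' t t' : Set α} (hs : s' ⊆ s) (ht : t' ⊆ t)
    (h : s ∩ t = ∅) : s' ∩ t' = ∅ :=
  Set.eq_empty_of_subset_empty ((Set.inter_subset_inter hs ht).trans h.subset)

lemma continuous_coord (i : ℕ) : Continuous (fun x : ShiftSpace A => x.1 i) :=
  (continuous_apply i).comp continuous_subtype_val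

lemma isOpen_cyl (z : ShiftSpace A) (n : ℕ) : IsOpen (cyl z n) := by
  have h : cyl z n = ⋂ i ∈ Finset.range n, (fun x : ShiftSpace A => x.1 i) ⁻¹' {z.1 i} := by
    ext x; simp [cyl, Finset.mem_range]
  rw [h]
  exact isOpen_biInter_finset fun i _ =>
    (continuous_coord i).isOpen_preimage _ (isOpen_discrete _)

lemma isClosed_cyl (z : ShiftSpace A) (n : ℕ) : IsClosed (cyl z n) := by
  have h : cyl z n = ⋂ (i : ℕ), ⋂ (_ : i < n), (fun x : ShiftSpace A => x.1 i) ⁻¹' {z.1 i} := by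
    ext x; simp [cyl]
  rw [h]
  exact isClosed_iInter fun i => isClosed_iInter fun _ =>
    (isClosed_discrete _).preimage (continuous_coord i)

lemma isClopen_cyl (z : ShiftSpace A) (n : ℕ) : IsClopen (cyl z n) :=
  ⟨isClosed_cyl z n, isOpen_cyl z n⟩

lemma pi_cyl_nbhd {K : Type*} [TopologicalSpace K] [DiscreteTopology K] {V : Set (ℕ → K)}
    (hV : IsOpen V) {u : ℕ → K} (hu : u ∈ V) : ∃ n, {f : ℕ → K | ∀ i < n, f i = u i} ⊆ V := by
  have h1 : V ∈ nhds u := hV.mem_nhds hu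
  rw [nhds_pi] at h1
  simp only [nhds_discrete] at h1
  rw [Filter.mem_pi] at h1
  obtain ⟨I, hIfin, t, ht, hsub⟩ := h1
  obtain ⟨b, hb⟩ := hIfin.bddAbove
  refine ⟨b + 1, fun f hf => hsub fun i hi => ?_⟩
  have hfi : f i = u i := hf i (Nat.lt_succ_of_le (hb hi))
  rw [hfi]
  exact Filter.mem_pure.mp (ht i)

lemma exists_cyl_subset {O : Set (ShiftSpace A)} (hO : IsOpen O) {x : ShiftSpace A}
    (hx : x ∈ O) : ∃ n, 1 ≤ n ∧ cyl x n ⊆ O := by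
  rw [isOpen_induced_iff] at hO
  obtain ⟨V, hV, rfl⟩ := hO
  obtain ⟨n, hn⟩ := pi_cyl_nbhd hV hx
  exact ⟨n + 1, by omega, fun y hy => hn fun i hi => hy i (by omega)⟩

lemma cantor_two {V : Set (ℕ → Bool)} (hV : IsOpen V) {u : ℕ → Bool} (hu : u ∈ V) :
    ∃ v ∈ V, v ≠ u := by
  obtain ⟨n, hn⟩ := pi_cyl_nbhd hV hu
  refine ⟨Function.update u n (!(u n)),
    hn fun i hi => Function.update_of_ne (Nat.ne_of_lt hi) _ _, fun h => ?_⟩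
  have h2 := congrFun h n
  rw [Function.update_self] at h2
  simp at h2

lemma exists_ne_mem (hI : ConditionI A) {U : Set (ShiftSpace A)} (hU : IsOpen U)
    {z : ShiftSpace A} (hz : z ∈ U) : ∃ y ∈ U, y ≠ z := by
  obtain ⟨e⟩ := hI
  have hV : IsOpen (e.symm ⁻¹' U) := e.symm.continuous.isOpen_preimage _ hU
  have hz' : e z ∈ e.symm ⁻¹' U := by
    simp only [Set.mem_preimage, Homeomorph.symm_apply_apply]; exact hz
  obtain ⟨v, hv, hne⟩ := cantor_two hV hz'
  refine ⟨e.symm v, hv, fun h => hne ?_⟩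
  have : v = e (e.symm v) := (e.apply_symm_apply v).symm
  rw [this, h]

end Stmt3Aux

namespace Stmt3Aux

variable {N : ℕ} {A : Fin N → Fin N → Bool}

lemma exists_succ_letter (hA : MatrixIrreducible A) (b : Fin N) : ∃ c, A b c = true := by
  obtain ⟨m, hm, w, hw0, hwm, hstep⟩ := hA b b
  exact ⟨w 1, by rw [← hw0]; exact hstep 0 hm⟩

/-- An infinite admissible tail starting from a given letter. -/
noncomputable def tailFrom (hA : MatrixIrreducible A) (a : Fin N) : ℕ → Fin N :=
  fun j => Nat.rec a (fun _ prev => Classical.choose (exists_succ_letter hA prev)) j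

lemma tailFrom_adm (hA : MatrixIrreducible A) (a : Fin N) (j : ℕ) :
    A (tailFrom hA a j) (tailFrom hA a (j + 1)) = true :=
  Classical.choose_spec (exists_succ_letter hA (tailFrom hA a j))

lemma tailFrom_zero (hA : MatrixIrreducible A) (a : Fin N) : tailFrom hA a 0 = a := rfl

/-- Extend the length-`n` prefix of a point `z` to a longer pointed cylinder ending
with the letter `a`. -/
lemma extend (hA : MatrixIrreducible A) (z : ShiftSpace A) (n : ℕ) (hn : 1 ≤ n) (a : Fin N) :
    ∃ (z' : ShiftSpace A) (l : ℕ), n ≤ l ∧ (∀ i < n, z'.1 i = z.1 i) ∧ z'.1 (l - 1) = a := by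
  obtain ⟨n', rfl⟩ : ∃ n', n = n' + 1 := ⟨n - 1, by omega⟩
  obtain ⟨m, hm, w, hw0, hwm, hstep⟩ := hA (z.1 n') a
  refine ⟨⟨fun j => if j ≤ n' then z.1 j else if j ≤ n' + m then w (j - n')
      else tailFrom hA a (j - n' - m), fun j => ?_⟩, n' + m + 1, by omega, ?_, ?_⟩
  · beta_reduce
    by_cases h1 : j + 1 ≤ n'
    · rw [if_pos (show j ≤ n' by omega), if_pos h1]; exact z.2 j
    · by_cases h2 : j ≤ n'
      · -- j = n'
        have hj : j = n' := by omega
        have he : j + 1 - n' = 1 := by omega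
        rw [if_pos h2, if_neg h1, if_pos (show j + 1 ≤ n' + m by omega), he, hj, ← hw0]
        exact hstep 0 hm
      · by_cases h3 : j + 1 ≤ n' + m
        · have he : j + 1 - n' = (j - n') + 1 := by omega
          rw [if_neg h2, if_pos (show j ≤ n' + m by omega), if_neg h1, if_pos h3, he]
          exact hstep (j - n') (by omega)
        · by_cases h4 : j ≤ n' + m
          · -- j = n' + m
            have he1 : j - n' = m := by omega
            have he2 : j + 1 - n' - m = 1 := by omega
            rw [if_neg h2, if_pos h4, if_neg h1, if_neg h3, he2, he1, hwm]
            have := tailFrom_adm hA a 0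
            rwa [tailFrom_zero] at this
          · have he : j + 1 - n' - m = (j - n' - m) + 1 := by omega
            rw [if_neg h2, if_neg h4, if_neg h1, if_neg h3, he]
            exact tailFrom_adm hA a _
  · intro i hi
    simp only
    rw [if_pos (by omega : i ≤ n')]
  · simp only
    rw [if_neg (by omega : ¬ (n' + m + 1 - 1 ≤ n')), if_pos (by omega : n' + m + 1 - 1 ≤ n' + m)]
    have he : n' + m + 1 - 1 - n' = m := by omega
    rw [he, hwm]

/-- Split a pointed cylinder into a subcylinder ending in `a` plus a disjoint
remainder pointed cylinder. -/
lemma stepSplit (hA : MatrixIrreducible A) (hI : ConditionI A) (z : ShiftSpace A) (l : ℕ)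
    (hl : 1 ≤ l) (a : Fin N) :
    ∃ (z₁ : ShiftSpace A) (l₁ : ℕ) (y : ShiftSpace A) (d : ℕ),
      1 ≤ l₁ ∧ cyl z₁ l₁ ⊆ cyl z l ∧ cyl y (d + 1) ⊆ cyl z l ∧
      cyl z₁ l₁ ∩ cyl y (d + 1) = ∅ ∧ z₁.1 (l₁ - 1) = a := by
  obtain ⟨y, hy, hne⟩ := exists_ne_mem hI (isOpen_cyl z l) (mem_cyl_self z l)
  have hdiff : ∃ d, z.1 d ≠ y.1 d := by
    by_contra h
    push_neg at h
    exact hne (Subtype.ext (funext fun i => (h i).symm))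
  obtain ⟨d, hd⟩ := hdiff
  have hdl : l ≤ d := by
    by_contra h
    exact hd ((hy d (by omega)).symm)
  obtain ⟨z₁, l₁, hll, hagree, hend⟩ := extend hA z (d + 1) (by omega) a
  refine ⟨z₁, l₁, y, d, by omega, ?_, ?_, ?_, hend⟩
  · calc cyl z₁ l₁ ⊆ cyl z₁ (d + 1) := cyl_mono hll
      _ = cyl z (d + 1) := cyl_eq_of_agree hagree
      _ ⊆ cyl z l := cyl_mono (by omega)
  · calc cyl y (d + 1) ⊆ cyl y l := cyl_mono (by omega)
      _ = cyl z l := cyl_eq_of_agree hy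
  · refine inter_empty_mono ?_ (subset_refl _) (cyl_disjoint (Nat.lt_succ_self d) hd)
    calc cyl z₁ l₁ ⊆ cyl z₁ (d + 1) := cyl_mono hll
      _ = cyl z (d + 1) := cyl_eq_of_agree hagree

/-- Arbitrarily large pairwise-disjoint families of pointed cylinders inside `cyl x n`,
all ending with the letter `a`, together with a disjoint remainder. -/
lemma family (hA : MatrixIrreducible A) (hI : ConditionI A) (x : ShiftSpace A) (n : ℕ)
    (hn : 1 ≤ n) (a : Fin N) (M : ℕ) :
    ∃ (zs : ℕ → ShiftSpace A) (ls : ℕ → ℕ),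
      (∀ i < M, 1 ≤ ls i ∧ cyl (zs i) (ls i) ⊆ cyl x n ∧ (zs i).1 (ls i - 1) = a) ∧
      (∀ i < M, ∀ j < M, i ≠ j → cyl (zs i) (ls i) ∩ cyl (zs j) (ls j) = ∅) := by
  suffices h : ∃ (zs : ℕ → ShiftSpace A) (ls : ℕ → ℕ) (r : ShiftSpace A) (rl : ℕ),
      1 ≤ rl ∧ cyl r rl ⊆ cyl x n ∧
      (∀ i < M, 1 ≤ ls i ∧ cyl (zs i) (ls i) ⊆ cyl x n ∧ (zs i).1 (ls i - 1) = a ∧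
        cyl (zs i) (ls i) ∩ cyl r rl = ∅) ∧
      (∀ i < M, ∀ j < M, i ≠ j → cyl (zs i) (ls i) ∩ cyl (zs j) (ls j) = ∅) by
    obtain ⟨zs, ls, r, rl, _, _, h1, h2⟩ := h
    exact ⟨zs, ls, fun i hi => ⟨(h1 i hi).1, (h1 i hi).2.1, (h1 i hi).2.2.1⟩, h2⟩
  induction M with
  | zero =>
    exact ⟨fun _ => x, fun _ => n, x, n, hn, subset_rfl, fun i hi => absurd hi (by omega),
      fun i hi => absurd hi (by omega)⟩
  | succ M ih =>
    obtain ⟨zs, ls, r, rl, hrl, hrsub, hmem, hpair⟩ := ih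
    obtain ⟨z₁, l₁, y, d, hl₁, hsub1, hsubr, hdisj1, hend1⟩ := stepSplit hA hI r rl hrl a
    refine ⟨fun i => if i = M then z₁ else zs i, fun i => if i = M then l₁ else ls i, y, d + 1,
      by omega, hsubr.trans hrsub, ?_, ?_⟩
    · intro i hi
      by_cases h : i = M
      · simp only [if_pos h]
        exact ⟨hl₁, hsub1.trans hrsub, hend1, hdisj1⟩
      · have hiM : i < M := by omega
        simp only [if_neg h]
        exact ⟨(hmem i hiM).1, (hmem i hiM).2.1, (hmem i hiM).2.2.1,
          inter_empty_mono (subset_refl _) hsubr (hmem i hiM).2.2.2⟩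
    · intro i hi j hj hij
      by_cases h1 : i = M
      · have hjM : j < M := by omega
        simp only [if_pos h1, if_neg (show ¬ j = M by omega)]
        rw [Set.inter_comm]
        exact inter_empty_mono (subset_refl _) hsub1 (hmem j hjM).2.2.2
      · by_cases h2 : j = M
        · have hiM : i < M := by omega
          simp only [if_neg h1, if_pos h2]
          exact inter_empty_mono (subset_refl _) hsub1 (hmem i hiM).2.2.2
        · simp only [if_neg h1, if_neg h2]
          exact hpair i (by omega) j (by omega) hij

end Stmt3Aux

namespace Stmt3Aux

attribute [local instance] Classical.propDecidable

variable {N : ℕ} {A : Fin N → Fin N → Bool}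

/-- The spliced sequence: prefix of `w` of length `m`, followed by the tail of `x`
after position `n`. -/
def spliceSeq (w : ShiftSpace A) (m n : ℕ) (x : ShiftSpace A) : ℕ → Fin N :=
  fun j => if j < m then w.1 j else x.1 (j - m + n)

lemma spliceSeq_adm (w : ShiftSpace A) (m n : ℕ) (hm : 1 ≤ m) (hn : 1 ≤ n)
    (x : ShiftSpace A) (hlast : w.1 (m - 1) = x.1 (n - 1)) (j : ℕ) :
    A (spliceSeq w m n x j) (spliceSeq w m n x (j + 1)) = true := by
  unfold spliceSeq
  rcases lt_trichotomy (j + 1) m with h | h | h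
  · rw [if_pos (by omega : j < m), if_pos h]
    exact w.2 j
  · have h1 : j = m - 1 := by omega
    have h2 : j + 1 - m + n = n := by omega
    rw [if_pos (by omega : j < m), if_neg (by omega : ¬ j + 1 < m), h2, h1, hlast]
    have := x.2 (n - 1)
    rwa [show n - 1 + 1 = n by omega] at this
  · rw [if_neg (by omega : ¬ j < m), if_neg (by omega : ¬ j + 1 < m),
      show j + 1 - m + n = (j - m + n) + 1 by omega]
    exact x.2 _

/-- The point obtained by splicing. -/
def splicePt (w : ShiftSpace A) (m n : ℕ) (hm : 1 ≤ m) (hn : 1 ≤ n) (x : ShiftSpace A)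
    (hlast : w.1 (m - 1) = x.1 (n - 1)) : ShiftSpace A :=
  ⟨spliceSeq w m n x, spliceSeq_adm w m n hm hn x hlast⟩

section Swap

variable (z w : ShiftSpace A) (n m : ℕ) (hn : 1 ≤ n) (hm : 1 ≤ m)
  (hend : z.1 (n - 1) = w.1 (m - 1))

/-- The swap of the cylinders `cyl z n` and `cyl w m`. -/
noncomputable def swapFun : ShiftSpace A → ShiftSpace A := fun x =>
  if h1 : x ∈ cyl z n then
    splicePt w m n hm hn x (by rw [h1 (n - 1) (by omega), ← hend])
  else if h2 : x ∈ cyl w m then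
    splicePt z n m hn hm x (by rw [h2 (m - 1) (by omega), hend])
  else x

lemma swapFun_coord_of_mem₁ {x : ShiftSpace A} (h1 : x ∈ cyl z n) (j : ℕ) :
    (swapFun z w n m hn hm hend x).1 j = if j < m then w.1 j else x.1 (j - m + n) := by
  unfold swapFun
  rw [dif_pos h1]
  rfl

lemma swapFun_coord_of_mem₂ {x : ShiftSpace A} (h1 : x ∉ cyl z n) (h2 : x ∈ cyl w m) (j : ℕ) :
    (swapFun z w n m hn hm hend x).1 j = if j < n then z.1 j else x.1 (j - n + m) := by
  unfold swapFun
  rw [dif_neg h1, dif_pos h2]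
  rfl

lemma swapFun_of_notMem {x : ShiftSpace A} (h1 : x ∉ cyl z n) (h2 : x ∉ cyl w m) :
    swapFun z w n m hn hm hend x = x := by
  unfold swapFun
  rw [dif_neg h1, dif_neg h2]

lemma swapFun_mem₁ {x : ShiftSpace A} (h1 : x ∈ cyl z n) :
    swapFun z w n m hn hm hend x ∈ cyl w m := by
  intro i hi
  rw [swapFun_coord_of_mem₁ z w n m hn hm hend h1 i, if_pos hi]

lemma notMem_of_mem₂ (hdisj : cyl z n ∩ cyl w m = ∅) {x : ShiftSpace A}
    (h2 : x ∈ cyl w m) : x ∉ cyl z n := fun h1 =>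
  Set.eq_empty_iff_forall_notMem.mp hdisj x ⟨h1, h2⟩

lemma swapFun_mem₂ (hdisj : cyl z n ∩ cyl w m = ∅) {x : ShiftSpace A} (h2 : x ∈ cyl w m) :
    swapFun z w n m hn hm hend x ∈ cyl z n := by
  intro i hi
  rw [swapFun_coord_of_mem₂ z w n m hn hm hend (notMem_of_mem₂ z w n m hdisj h2) h2 i,
    if_pos hi]

lemma swapFun_invol (hdisj : cyl z n ∩ cyl w m = ∅) (x : ShiftSpace A) :
    swapFun z w n m hn hm hend (swapFun z w n m hn hm hend x) = x := by
  by_cases h1 : x ∈ cyl z n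
  · have hy2 : swapFun z w n m hn hm hend x ∈ cyl w m := swapFun_mem₁ z w n m hn hm hend h1
    have hy1 : swapFun z w n m hn hm hend x ∉ cyl z n :=
      notMem_of_mem₂ z w n m hdisj hy2
    apply Subtype.ext
    funext j
    rw [swapFun_coord_of_mem₂ z w n m hn hm hend hy1 hy2 j]
    by_cases hj : j < n
    · rw [if_pos hj, h1 j hj]
    · rw [if_neg hj, swapFun_coord_of_mem₁ z w n m hn hm hend h1,
        if_neg (by omega : ¬ j - n + m < m), show j - n + m - m + n = j by omega]
  · by_cases h2 : x ∈ cyl w m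
    · have hy1 : swapFun z w n m hn hm hend x ∈ cyl z n :=
        swapFun_mem₂ z w n m hn hm hend hdisj h2
      apply Subtype.ext
      funext j
      rw [swapFun_coord_of_mem₁ z w n m hn hm hend hy1]
      by_cases hj : j < m
      · rw [if_pos hj, h2 j hj]
      · rw [if_neg hj, swapFun_coord_of_mem₂ z w n m hn hm hend h1 h2,
          if_neg (by omega : ¬ j - m + n < n), show j - m + n - n + m = j by omega]
    · rw [swapFun_of_notMem z w n m hn hm hend h1 h2,
        swapFun_of_notMem z w n m hn hm hend h1 h2]

lemma swapFun_cont : Continuous (swapFun z w n m hn hm hend) := by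
  rw [continuous_induced_rng]
  apply continuous_pi
  intro j
  have heq : ∀ x : ShiftSpace A,
      (if x ∈ cyl z n then (if j < m then w.1 j else x.1 (j - m + n))
        else if x ∈ cyl w m then (if j < n then z.1 j else x.1 (j - n + m)) else x.1 j)
      = (Subtype.val ∘ swapFun z w n m hn hm hend) x j := by
    intro x
    by_cases h1 : x ∈ cyl z n
    · rw [if_pos h1]
      exact (swapFun_coord_of_mem₁ z w n m hn hm hend h1 j).symm
    · by_cases h2 : x ∈ cyl w m
      · rw [if_neg h1, if_pos h2]
        exact (swapFun_coord_of_mem₂ z w n m hn hm hend h1 h2 j).symm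
      · rw [if_neg h1, if_neg h2]
        rw [Function.comp_apply, swapFun_of_notMem z w n m hn hm hend h1 h2]
  have hev : ∀ k, Continuous (fun x : ShiftSpace A => x.1 k) := continuous_coord
  have hc1 : Continuous (fun x : ShiftSpace A => if j < m then w.1 j else x.1 (j - m + n)) := by
    by_cases h : j < m
    · simp only [if_pos h]; exact continuous_const
    · simp only [if_neg h]; exact hev _
  have hc2 : Continuous (fun x : ShiftSpace A => if j < n then z.1 j else x.1 (j - n + m)) := by
    by_cases h : j < n
    · simp only [if_pos h]; exact continuous_const
    · simp only [if_neg h]; exact hev _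
  have hc3 : Continuous (fun x : ShiftSpace A =>
      if x ∈ cyl w m then (if j < n then z.1 j else x.1 (j - n + m)) else x.1 j) := by
    apply Continuous.if ?_ hc2 (hev j)
    intro a ha
    rw [Set.setOf_mem_eq, (isClopen_cyl w m).frontier_eq] at ha
    exact absurd ha (Set.notMem_empty a)
  have hc4 : Continuous (fun x : ShiftSpace A =>
      if x ∈ cyl z n then (if j < m then w.1 j else x.1 (j - m + n))
        else if x ∈ cyl w m then (if j < n then z.1 j else x.1 (j - n + m)) else x.1 j) := by
    apply Continuous.if ?_ hc1 hc3
    intro a ha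
    rw [Set.setOf_mem_eq, (isClopen_cyl z n).frontier_eq] at ha
    exact absurd ha (Set.notMem_empty a)
  exact hc4.congr heq

/-- The swap homeomorphism. -/
noncomputable def swapHomeo (hdisj : cyl z n ∩ cyl w m = ∅) :
    ShiftSpace A ≃ₜ ShiftSpace A where
  toFun := swapFun z w n m hn hm hend
  invFun := swapFun z w n m hn hm hend
  left_inv := swapFun_invol z w n m hn hm hend hdisj
  right_inv := swapFun_invol z w n m hn hm hend hdisj
  continuous_toFun := swapFun_cont z w n m hn hm hend
  continuous_invFun := swapFun_cont z w n m hn hm hend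

end Swap

end Stmt3Aux

namespace Stmt3Aux

attribute [local instance] Classical.propDecidable

variable {N : ℕ} {A : Fin N → Fin N → Bool}

lemma shift_iter (x : ShiftSpace A) (k j : ℕ) : ((shiftMap A)^[k] x).1 j = x.1 (j + k) := by
  induction k generalizing x with
  | zero => rfl
  | succ k ih =>
    rw [Function.iterate_succ_apply, ih (shiftMap A x)]
    show x.1 (j + k + 1) = x.1 (j + (k + 1))
    rw [Nat.add_assoc]

section Swap

variable (z w : ShiftSpace A) (n m : ℕ) (hn : 1 ≤ n) (hm : 1 ≤ m)
  (hend : z.1 (n - 1) = w.1 (m - 1)) (hdisj : cyl z n ∩ cyl w m = ∅)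

lemma swapHomeo_mem_fullGroup : swapHomeo z w n m hn hm hend hdisj ∈ fullGroup A := by
  refine ⟨fun x => if x ∈ cyl z n then m else if x ∈ cyl w m then n else 0,
    fun x => if x ∈ cyl z n then n else if x ∈ cyl w m then m else 0, ?_, ?_, ?_⟩
  · apply Continuous.if ?_ continuous_const
    · apply Continuous.if ?_ continuous_const continuous_const
      intro a ha
      rw [Set.setOf_mem_eq, (isClopen_cyl w m).frontier_eq] at ha
      exact absurd ha (Set.notMem_empty a)
    · intro a ha
      rw [Set.setOf_mem_eq, (isClopen_cyl z n).frontier_eq] at ha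
      exact absurd ha (Set.notMem_empty a)
  · apply Continuous.if ?_ continuous_const
    · apply Continuous.if ?_ continuous_const continuous_const
      intro a ha
      rw [Set.setOf_mem_eq, (isClopen_cyl w m).frontier_eq] at ha
      exact absurd ha (Set.notMem_empty a)
    · intro a ha
      rw [Set.setOf_mem_eq, (isClopen_cyl z n).frontier_eq] at ha
      exact absurd ha (Set.notMem_empty a)
  · intro x
    beta_reduce
    by_cases h1 : x ∈ cyl z n
    · rw [if_pos h1, if_pos h1]
      apply Subtype.ext
      funext j
      rw [shift_iter, shift_iter]
      show (swapFun z w n m hn hm hend x).1 (j + m) = x.1 (j + n)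
      rw [swapFun_coord_of_mem₁ z w n m hn hm hend h1, if_neg (by omega : ¬ j + m < m),
        show j + m - m + n = j + n by omega]
    · by_cases h2 : x ∈ cyl w m
      · rw [if_neg h1, if_pos h2, if_neg h1, if_pos h2]
        apply Subtype.ext
        funext j
        rw [shift_iter, shift_iter]
        show (swapFun z w n m hn hm hend x).1 (j + n) = x.1 (j + m)
        rw [swapFun_coord_of_mem₂ z w n m hn hm hend h1 h2, if_neg (by omega : ¬ j + n < n),
          show j + n - n + m = j + m by omega]
      · rw [if_neg h1, if_neg h2, if_neg h1, if_neg h2]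
        show (shiftMap A)^[0] (swapFun z w n m hn hm hend x) = (shiftMap A)^[0] x
        rw [Function.iterate_zero_apply, Function.iterate_zero_apply,
          swapFun_of_notMem z w n m hn hm hend h1 h2]

lemma swapHomeo_mem_localGroup {O : Set (ShiftSpace A)} (hzO : cyl z n ⊆ O)
    (hwO : cyl w m ⊆ O) : swapHomeo z w n m hn hm hend hdisj ∈ localGroup A O := by
  refine ⟨swapHomeo_mem_fullGroup z w n m hn hm hend hdisj, fun x hx => ?_⟩
  show swapFun z w n m hn hm hend x = x
  exact swapFun_of_notMem z w n m hn hm hend (fun h => hx (hzO h)) (fun h => hx (hwO h))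

lemma swapHomeo_preimage :
    ⇑(swapHomeo z w n m hn hm hend hdisj) ⁻¹' cyl w m = cyl z n := by
  ext x
  simp only [Set.mem_preimage]
  show swapFun z w n m hn hm hend x ∈ cyl w m ↔ x ∈ cyl z n
  constructor
  · intro h
    by_cases h1 : x ∈ cyl z n
    · exact h1
    · by_cases h2 : x ∈ cyl w m
      · exact absurd (Set.eq_empty_iff_forall_notMem.mp hdisj _
          ⟨swapFun_mem₂ z w n m hn hm hend hdisj h2, h⟩) not_false
      · rw [swapFun_of_notMem z w n m hn hm hend h1 h2] at h
        exact absurd h h2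
  · exact swapFun_mem₁ z w n m hn hm hend

open MeasureTheory in
include hn hm hend hdisj in
lemma swap_measure_eq [MeasurableSpace (ShiftSpace A)] [BorelSpace (ShiftSpace A)]
    {O : Set (ShiftSpace A)} (μ : Measure (ShiftSpace A))
    (hinv : ∀ g ∈ localGroup A O, Measure.map (⇑g) μ = μ)
    (hzO : cyl z n ⊆ O) (hwO : cyl w m ⊆ O) : μ (cyl z n) = μ (cyl w m) := by
  have hmem := swapHomeo_mem_localGroup z w n m hn hm hend hdisj hzO hwO
  have h := hinv _ hmem
  have hms : MeasurableSet (cyl w m) := (isOpen_cyl w m).measurableSet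
  calc μ (cyl z n)
      = μ (⇑(swapHomeo z w n m hn hm hend hdisj) ⁻¹' cyl w m) := by
        rw [swapHomeo_preimage]
    _ = Measure.map (⇑(swapHomeo z w n m hn hm hend hdisj)) μ (cyl w m) :=
        (Measure.map_apply (swapHomeo z w n m hn hm hend hdisj).continuous.measurable hms).symm
    _ = μ (cyl w m) := by rw [h]

end Swap

end Stmt3Aux

open Stmt3Aux

open MeasureTheory in
theorem stmt3 {N : ℕ} (hN : 1 < N) (A : Fin N → Fin N → Bool)
    (hA : MatrixIrreducible A) (hI : ConditionI A)
    [MeasurableSpace (ShiftSpace A)] [BorelSpace (ShiftSpace A)]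
    (O : Set (ShiftSpace A)) (hO : IsOpen O) (hOne : O.Nonempty) :
    ¬ ∃ μ : Measure (ShiftSpace A), IsProbabilityMeasure μ ∧ μ.Regular ∧ μ Oᶜ = 0 ∧
        ∀ g ∈ localGroup A O, Measure.map (⇑g) μ = μ := by
  rintro ⟨μ, hprob, _, hnull, hinv⟩
  haveI : SecondCountableTopology (ShiftSpace A) :=
    TopologicalSpace.secondCountableTopology_induced _ _ Subtype.val
  have hO0 : μ O = 0 := by
    apply measure_null_of_locally_null
    intro x hx
    obtain ⟨n₀, hn₀1, hn₀O⟩ := exists_cyl_subset hO hx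
    obtain ⟨y, hyV, hyx⟩ := exists_ne_mem hI (isOpen_cyl x n₀) (mem_cyl_self x n₀)
    have hdiff : ∃ d, x.1 d ≠ y.1 d := by
      by_contra h
      push_neg at h
      exact hyx (Subtype.ext (funext fun i => (h i).symm))
    obtain ⟨d, hd⟩ := hdiff
    have hdn₀ : n₀ ≤ d := by
      by_contra h
      exact hd (hyV d (by omega)).symm
    have hCO : cyl x (d + 1) ⊆ O := (cyl_mono (by omega)).trans hn₀O
    have hRO : cyl y (d + 1) ⊆ O := by
      calc cyl y (d + 1) ⊆ cyl y n₀ := cyl_mono (by omega)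
        _ = cyl x n₀ := cyl_eq_of_agree hyV
        _ ⊆ O := hn₀O
    have hCR : cyl x (d + 1) ∩ cyl y (d + 1) = ∅ := cyl_disjoint (by omega) hd
    obtain ⟨z', l, hln, hagree, hend'⟩ := extend hA y (d + 1) (by omega) (x.1 d)
    have hl1 : 1 ≤ l := by omega
    have hDR : cyl z' l ⊆ cyl y (d + 1) := by
      calc cyl z' l ⊆ cyl z' (d + 1) := cyl_mono hln
        _ = cyl y (d + 1) := cyl_eq_of_agree hagree
    have hDO : cyl z' l ⊆ O := hDR.trans hRO
    have hDC : cyl x (d + 1) ∩ cyl z' l = ∅ :=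
      inter_empty_mono (subset_refl _) hDR hCR
    have hbound : ∀ M : ℕ, (M : ENNReal) * μ (cyl z' l) ≤ 1 := by
      intro M
      obtain ⟨zs, ls, hmem, hpair⟩ := family hA hI x (d + 1) (by omega) (x.1 d) M
      have heach : ∀ i ∈ Finset.range M, μ (cyl (zs i) (ls i)) = μ (cyl z' l) := by
        intro i hi
        have hiM : i < M := Finset.mem_range.mp hi
        obtain ⟨h1, h2, h3⟩ := hmem i hiM
        refine swap_measure_eq (zs i) z' (ls i) l h1 hl1 ?_ ?_ μ hinv (h2.trans hCO) hDO
        · rw [h3, hend']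
        · exact inter_empty_mono h2 (subset_refl _) hDC
      have hdisjF : (↑(Finset.range M) : Set ℕ).PairwiseDisjoint
          (fun i => cyl (zs i) (ls i)) := by
        intro i hi j hj hij
        exact Set.disjoint_iff_inter_eq_empty.mpr
          (hpair i (Finset.mem_range.mp (Finset.mem_coe.mp hi))
            j (Finset.mem_range.mp (Finset.mem_coe.mp hj)) hij)
      have hms : ∀ i ∈ Finset.range M, MeasurableSet (cyl (zs i) (ls i)) :=
        fun i _ => (isOpen_cyl _ _).measurableSet
      have hsum := measure_biUnion_finset (μ := μ) hdisjF hms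
      calc (M : ENNReal) * μ (cyl z' l)
          = ∑ i ∈ Finset.range M, μ (cyl (zs i) (ls i)) := by
            rw [Finset.sum_congr rfl heach, Finset.sum_const, Finset.card_range, nsmul_eq_mul]
        _ = μ (⋃ i ∈ Finset.range M, cyl (zs i) (ls i)) := hsum.symm
        _ ≤ μ Set.univ := measure_mono (Set.subset_univ _)
        _ = 1 := hprob.measure_univ
    have hD0 : μ (cyl z' l) = 0 := by
      by_contra h0
      have htop : (⊤ : ENNReal) ≤ 1 := by
        calc (⊤ : ENNReal) = ⊤ * μ (cyl z' l) := (ENNReal.top_mul h0).symm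
          _ = (⨆ M : ℕ, (M : ENNReal)) * μ (cyl z' l) := by rw [ENNReal.iSup_natCast]
          _ = ⨆ M : ℕ, (M : ENNReal) * μ (cyl z' l) := ENNReal.iSup_mul _ _
          _ ≤ 1 := iSup_le hbound
      exact absurd htop (by simp)
    have hC0 : μ (cyl x (d + 1)) = 0 := by
      have heq := swap_measure_eq x z' (d + 1) l (by omega) hl1
        (by rw [Nat.add_sub_cancel]; exact hend'.symm) hDC μ hinv hCO hDO
      rw [heq, hD0]
    exact ⟨cyl x (d + 1), mem_nhdsWithin_of_mem_nhds
      ((isOpen_cyl x (d + 1)).mem_nhds (mem_cyl_self x (d + 1))), hC0⟩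
  have h1 : μ Set.univ ≤ 0 := by
    rw [← Set.union_compl_self O]
    refine le_trans (measure_union_le _ _) ?_
    rw [hO0, hnull]
    simp
  rw [hprob.measure_univ] at h1
  exact absurd h1 (by simp)
end

section
/- For open sets O, O₁, O₂ ⊆ X_A: (i) O₁ ⊆ O₂ if and only if Γ_{O₁} ⊆ Γ_{O₂}; (ii) Γ_O ∩ Γ_{O^⊥} = {id}; (iii) the commutant of Γ_O in Γ_A equals Γ_{O^⊥}, and Γ_O is contained in its double commutant; (iv) if O is regular open then Γ_O equals its double commutant in Γ_A. -/
open Set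

section Aux

variable {N : ℕ} {A : Fin N → Fin N → Bool}

lemma shift_iterate (n : ℕ) (x : ShiftSpace A) (k : ℕ) :
    ((shiftMap A)^[n] x).1 k = x.1 (k + n) := by
  induction n generalizing x k with
  | zero => rfl
  | succ n ih =>
    rw [Function.iterate_succ_apply, ih]
    show x.1 (k + n + 1) = x.1 (k + (n + 1))
    congr 1

/-- The cylinder set of sequences agreeing with `μ` on `[0, p]`. -/
def Cyl (A : Fin N → Fin N → Bool) (p : ℕ) (μ : ℕ → Fin N) : Set (ShiftSpace A) :=
  {x | ∀ k ≤ p, x.1 k = μ k}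

lemma isClopen_cyl_s6 (p : ℕ) (μ : ℕ → Fin N) : IsClopen (Cyl A p μ) := by
  have h : Cyl A p μ = ⋂ k ∈ Finset.range (p + 1), {x : ShiftSpace A | x.1 k = μ k} := by
    ext x
    simp [Cyl, Nat.lt_succ_iff]
  rw [h]
  exact isClopen_biInter_finset fun k _ =>
    (isClopen_discrete {μ k}).preimage ((continuous_apply k).comp continuous_subtype_val)

/-- Replace the prefix of length `p+1` of `x` by `ν` (of length `q+1`). -/
def repl (p q : ℕ) (ν : ℕ → Fin N) (x : ℕ → Fin N) : ℕ → Fin N :=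
  fun k => if k ≤ q then ν k else x (k - q + p)

lemma repl_adm {p q : ℕ} {ν : ℕ → Fin N} {x : ℕ → Fin N}
    (hν : ∀ k < q, A (ν k) (ν (k + 1)) = true)
    (hlast : ν q = x p)
    (hx : ∀ k, A (x k) (x (k + 1)) = true) :
    ∀ k, A (repl p q ν x k) (repl p q ν x (k + 1)) = true := by
  intro k
  unfold repl
  by_cases h1 : k + 1 ≤ q
  · rw [if_pos (by omega : k ≤ q), if_pos h1]
    exact hν k (by omega)
  · by_cases h2 : k ≤ q
    · have hkq : k = q := by omega
      subst hkq
      rw [if_pos h2, if_neg h1, hlast, (by omega : k + 1 - k + p = p + 1)]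
      exact hx p
    · rw [if_neg h2, if_neg h1, (by omega : k + 1 - q + p = (k - q + p) + 1)]
      exact hx _

lemma repl_repl {p q : ℕ} {μ ν : ℕ → Fin N} {x : ℕ → Fin N}
    (hx : ∀ k ≤ p, x k = μ k) :
    repl q p μ (repl p q ν x) = x := by
  funext k
  unfold repl
  by_cases h : k ≤ p
  · rw [if_pos h, hx k h]
  · rw [if_neg h, if_neg (by omega : ¬ k - p + q ≤ q), (by omega : k - p + q - q + p = k)]

open Classical in
/-- The prefix-swap map on the shift space. -/
noncomputable def swapFun (p q : ℕ) (μ ν : ℕ → Fin N) (x : ShiftSpace A) : ℕ → Fin N :=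
  if x ∈ Cyl A p μ then repl p q ν x.1 else if x ∈ Cyl A q ν then repl q p μ x.1 else x.1

end Aux
section Aux2

variable {N : ℕ} {A : Fin N → Fin N → Bool}
variable (p q : ℕ) (μ ν : ℕ → Fin N)

lemma swapFun_adm
    (hμ : ∀ k < p, A (μ k) (μ (k + 1)) = true)
    (hν : ∀ k < q, A (ν k) (ν (k + 1)) = true)
    (hlast : μ p = ν q) (x : ShiftSpace A) :
    ∀ k, A (swapFun p q μ ν x k) (swapFun p q μ ν x (k + 1)) = true := by
  unfold swapFun
  split_ifs with h1 h2
  · exact repl_adm hν (hlast.symm.trans (h1 p le_rfl).symm) x.2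
  · exact repl_adm hμ (hlast.trans (h2 q le_rfl).symm) x.2
  · exact x.2

/-- The prefix-swap map as a point of the shift space. -/
noncomputable def swapPt
    (hμ : ∀ k < p, A (μ k) (μ (k + 1)) = true)
    (hν : ∀ k < q, A (ν k) (ν (k + 1)) = true)
    (hlast : μ p = ν q) (x : ShiftSpace A) : ShiftSpace A :=
  ⟨swapFun p q μ ν x, swapFun_adm p q μ ν hμ hν hlast x⟩

lemma swap_invol
    (hμ : ∀ k < p, A (μ k) (μ (k + 1)) = true)
    (hν : ∀ k < q, A (ν k) (ν (k + 1)) = true)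
    (hlast : μ p = ν q)
    (j : ℕ) (hjp : j ≤ p) (hjq : j ≤ q) (hjne : μ j ≠ ν j) (x : ShiftSpace A) :
    swapPt p q μ ν hμ hν hlast (swapPt p q μ ν hμ hν hlast x) = x := by
  classical
  apply Subtype.ext
  set y := swapPt p q μ ν hμ hν hlast x with hy
  show swapFun p q μ ν y = x.1
  by_cases h1 : x ∈ Cyl A p μ
  · have hy1 : y.1 = repl p q ν x.1 := by
      show swapFun p q μ ν x = _
      unfold swapFun
      rw [if_pos h1]
    have hymem : y ∈ Cyl A q ν := by
      intro k hk
      rw [hy1]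
      exact if_pos hk
    have hynot : y ∉ Cyl A p μ := by
      intro hc
      exact hjne ((hc j hjp).symm.trans (hymem j hjq))
    unfold swapFun
    rw [if_neg hynot, if_pos hymem, hy1, repl_repl h1]
  · by_cases h2 : x ∈ Cyl A q ν
    · have hy1 : y.1 = repl q p μ x.1 := by
        show swapFun p q μ ν x = _
        unfold swapFun
        rw [if_neg h1, if_pos h2]
      have hymem : y ∈ Cyl A p μ := by
        intro k hk
        rw [hy1]
        exact if_pos hk
      unfold swapFun
      rw [if_pos hymem, hy1, repl_repl h2]
    · have hy1 : y = x := by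
        apply Subtype.ext
        show swapFun p q μ ν x = x.1
        unfold swapFun
        rw [if_neg h1, if_neg h2]
      rw [hy1]
      unfold swapFun
      rw [if_neg h1, if_neg h2]

lemma swapFun_continuous : Continuous (swapFun (A := A) p q μ ν) := by
  classical
  have hfr : ∀ (r : ℕ) (ρ : ℕ → Fin N), frontier {x : ShiftSpace A | x ∈ Cyl A r ρ} = ∅ := by
    intro r ρ
    rw [Set.setOf_mem_eq, (isClopen_cyl_s6 r ρ).frontier_eq]
  have hrepl : ∀ (a b : ℕ) (ρ : ℕ → Fin N), Continuous fun x : ShiftSpace A => repl a b ρ x.1 := by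
    intro a b ρ
    apply continuous_pi
    intro k
    unfold repl
    by_cases h : k ≤ b
    · simp only [if_pos h]
      exact continuous_const
    · simp only [if_neg h]
      exact (continuous_apply _).comp continuous_subtype_val
  unfold swapFun
  apply Continuous.if
  · intro a ha
    rw [hfr p μ] at ha
    exact ha.elim
  · exact hrepl p q ν
  · apply Continuous.if
    · intro a ha
      rw [hfr q ν] at ha
      exact ha.elim
    · exact hrepl q p μ
    · exact continuous_subtype_val

/-- The prefix-swap homeomorphism. -/
noncomputable def swapHomeo
    (hμ : ∀ k < p, A (μ k) (μ (k + 1)) = true)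
    (hν : ∀ k < q, A (ν k) (ν (k + 1)) = true)
    (hlast : μ p = ν q)
    (j : ℕ) (hjp : j ≤ p) (hjq : j ≤ q) (hjne : μ j ≠ ν j) :
    ShiftSpace A ≃ₜ ShiftSpace A where
  toFun := swapPt p q μ ν hμ hν hlast
  invFun := swapPt p q μ ν hμ hν hlast
  left_inv := swap_invol p q μ ν hμ hν hlast j hjp hjq hjne
  right_inv := swap_invol p q μ ν hμ hν hlast j hjp hjq hjne
  continuous_toFun := (swapFun_continuous p q μ ν).subtype_mk _
  continuous_invFun := (swapFun_continuous p q μ ν).subtype_mk _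

end Aux2
section Aux3

variable {N : ℕ} {A : Fin N → Fin N → Bool}
variable (p q : ℕ) (μ ν : ℕ → Fin N)
  (hμ : ∀ k < p, A (μ k) (μ (k + 1)) = true)
  (hν : ∀ k < q, A (ν k) (ν (k + 1)) = true)
  (hlast : μ p = ν q)
  (j : ℕ) (hjp : j ≤ p) (hjq : j ≤ q) (hjne : μ j ≠ ν j)

lemma swapHomeo_mem_full :
    swapHomeo p q μ ν hμ hν hlast j hjp hjq hjne ∈ fullGroup A := by
  classical
  refine ⟨fun x => if x ∈ Cyl A p μ then q + 1 else if x ∈ Cyl A q ν then p + 1 else 0,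
    fun x => if x ∈ Cyl A p μ then p + 1 else if x ∈ Cyl A q ν then q + 1 else 0, ?_, ?_, ?_⟩
  · apply Continuous.if
    · intro a ha
      rw [Set.setOf_mem_eq, (isClopen_cyl_s6 p μ).frontier_eq] at ha
      exact ha.elim
    · exact continuous_const
    · apply Continuous.if
      · intro a ha
        rw [Set.setOf_mem_eq, (isClopen_cyl_s6 q ν).frontier_eq] at ha
        exact ha.elim
      · exact continuous_const
      · exact continuous_const
  · apply Continuous.if
    · intro a ha
      rw [Set.setOf_mem_eq, (isClopen_cyl_s6 p μ).frontier_eq] at ha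
      exact ha.elim
    · exact continuous_const
    · apply Continuous.if
      · intro a ha
        rw [Set.setOf_mem_eq, (isClopen_cyl_s6 q ν).frontier_eq] at ha
        exact ha.elim
      · exact continuous_const
      · exact continuous_const
  · intro x
    by_cases h1 : x ∈ Cyl A p μ
    · simp only [if_pos h1]
      apply Subtype.ext
      funext k
      rw [shift_iterate, shift_iterate]
      show swapFun p q μ ν x (k + (q + 1)) = x.1 (k + (p + 1))
      unfold swapFun
      rw [if_pos h1]
      unfold repl
      rw [if_neg (by omega : ¬ k + (q + 1) ≤ q), (by omega : k + (q + 1) - q + p = k + (p + 1))]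
    · by_cases h2 : x ∈ Cyl A q ν
      · simp only [if_neg h1, if_pos h2]
        apply Subtype.ext
        funext k
        rw [shift_iterate, shift_iterate]
        show swapFun p q μ ν x (k + (p + 1)) = x.1 (k + (q + 1))
        unfold swapFun
        rw [if_neg h1, if_pos h2]
        unfold repl
        rw [if_neg (by omega : ¬ k + (p + 1) ≤ p), (by omega : k + (p + 1) - p + q = k + (q + 1))]
      · simp only [if_neg h1, if_neg h2]
        show (shiftMap A)^[0] _ = (shiftMap A)^[0] x
        apply congrArg
        apply Subtype.ext
        show swapFun p q μ ν x = x.1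
        unfold swapFun
        rw [if_neg h1, if_neg h2]

lemma swapHomeo_mem_local (U : Set (ShiftSpace A))
    (hUμ : Cyl A p μ ⊆ U) (hUν : Cyl A q ν ⊆ U) :
    swapHomeo p q μ ν hμ hν hlast j hjp hjq hjne ∈ localGroup A U := by
  refine ⟨swapHomeo_mem_full p q μ ν hμ hν hlast j hjp hjq hjne, ?_⟩
  intro x hx
  apply Subtype.ext
  show swapFun p q μ ν x = x.1
  unfold swapFun
  rw [if_neg (fun h => hx (hUμ h)), if_neg (fun h => hx (hUν h))]

end Aux3
section Aux4

variable {N : ℕ} {A : Fin N → Fin N → Bool}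

lemma exists_cyl_subset {U : Set (ShiftSpace A)} (hU : IsOpen U) {x : ShiftSpace A}
    (hx : x ∈ U) : ∃ n, ∀ z : ShiftSpace A, (∀ k ≤ n, z.1 k = x.1 k) → z ∈ U := by
  obtain ⟨V, hV, rfl⟩ := isOpen_induced_iff.mp hU
  obtain ⟨I, u, h1, h2⟩ := isOpen_pi_iff.mp hV x.1 hx
  refine ⟨I.sup id, fun z hz => ?_⟩
  apply h2
  intro i hi
  rw [hz i (Finset.le_sup (f := id) hi)]
  exact (h1 i hi).2

lemma exists_ne_mem_of_open (hI : ConditionI A) {U : Set (ShiftSpace A)} (hU : IsOpen U)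
    {x : ShiftSpace A} (hx : x ∈ U) : ∃ y ∈ U, y ≠ x := by
  obtain ⟨h⟩ := hI
  have hVopen : IsOpen (h.symm ⁻¹' U) := hU.preimage h.symm.continuous
  have hxV : h x ∈ h.symm ⁻¹' U := by
    show h.symm (h x) ∈ U
    rwa [h.symm_apply_apply]
  have tend : Filter.Tendsto (fun i => Function.update (h x) i (!(h x i)))
      Filter.atTop (nhds (h x)) := by
    rw [tendsto_pi_nhds]
    intro k
    apply tendsto_atTop_of_eventually_const (i₀ := k + 1)
    intro i hi
    rw [Function.update_of_ne (by omega)]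
  obtain ⟨i, hiV⟩ := (tend.eventually (hVopen.eventually_mem hxV)).exists
  refine ⟨h.symm (Function.update (h x) i (!(h x i))), hiV, ?_⟩
  intro hcontra
  have h1 : Function.update (h x) i (!(h x i)) = h x := by
    have := congrArg h hcontra
    rwa [h.apply_symm_apply] at this
  have h2 := congrFun h1 i
  rw [Function.update_self] at h2
  simp at h2

lemma exists_local_move (hA : MatrixIrreducible A) (hI : ConditionI A)
    {U : Set (ShiftSpace A)} (hU : IsOpen U) {x : ShiftSpace A} (hx : x ∈ U) :
    ∃ γ ∈ localGroup A U, γ x ≠ x := by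
  classical
  obtain ⟨n, hn⟩ := exists_cyl_subset hU hx
  have hxZ : x ∈ Cyl A n x.1 := fun k _ => rfl
  obtain ⟨y, hyZ, hyx⟩ := exists_ne_mem_of_open hI (isClopen_cyl_s6 n x.1).isOpen hxZ
  have hyx1 : ∃ k, y.1 k ≠ x.1 k := by
    by_contra hc
    push_neg at hc
    exact hyx (Subtype.ext (funext hc))
  set m := Nat.find hyx1 with hmdef
  have hm : y.1 m ≠ x.1 m := Nat.find_spec hyx1
  have hmlt : ∀ k < m, y.1 k = x.1 k := fun k hk => not_not.mp (Nat.find_min hyx1 hk)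
  have hnm : n < m := by
    by_contra hle
    push_neg at hle
    exact hm (hyZ m hle)
  obtain ⟨t, ht0, w, hw0, hwt, hwadm⟩ := hA (y.1 m) (x.1 (m + 1))
  set p := m + 1 with hpdef
  set q := m + t with hqdef
  set ν : ℕ → Fin N := fun k => if k < m then y.1 k else w (k - m) with hνdef
  have hμadm : ∀ k < p, A (x.1 k) (x.1 (k + 1)) = true := fun k _ => x.2 k
  have hνadm : ∀ k < q, A (ν k) (ν (k + 1)) = true := by
    intro k hk
    by_cases hk1 : k + 1 < m
    · show A (ν k) (ν (k + 1)) = true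
      simp only [hνdef]
      rw [if_pos (by omega : k < m), if_pos hk1]
      exact y.2 k
    · by_cases hk2 : k + 1 = m
      · show A (ν k) (ν (k + 1)) = true
        simp only [hνdef]
        rw [if_pos (by omega : k < m), if_neg (by omega : ¬ k + 1 < m),
          (by omega : k + 1 - m = 0), hw0, ← hk2]
        exact y.2 k
      · show A (ν k) (ν (k + 1)) = true
        simp only [hνdef]
        rw [if_neg (by omega : ¬ k < m), if_neg (by omega : ¬ k + 1 < m),
          (by omega : k + 1 - m = (k - m) + 1)]
        exact hwadm (k - m) (by omega)
  have hlast : x.1 p = ν q := by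
    simp only [hνdef]
    rw [if_neg (by omega : ¬ q < m), (by simp only [hqdef]; omega : q - m = t), hwt]
  have hjne : x.1 m ≠ ν m := by
    simp only [hνdef]
    rw [if_neg (by omega : ¬ m < m), (by omega : m - m = 0), hw0]
    exact fun hc => hm hc.symm
  have hUμ : Cyl A p x.1 ⊆ U := by
    intro z hz
    exact hn z fun k hk => hz k (by omega)
  have hUν : Cyl A q ν ⊆ U := by
    intro z hz
    apply hn z
    intro k hk
    rw [hz k (by omega)]
    simp only [hνdef]
    rw [if_pos (by omega : k < m)]
    exact hyZ k hk
  refine ⟨swapHomeo p q x.1 ν hμadm hνadm hlast m (by omega) (by omega) hjne,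
    swapHomeo_mem_local p q x.1 ν hμadm hνadm hlast m (by omega) (by omega) hjne U hUμ hUν, ?_⟩
  intro hcontra
  have hxCyl : x ∈ Cyl A p x.1 := fun k _ => rfl
  have heval : (swapHomeo p q x.1 ν hμadm hνadm hlast m (by omega) (by omega) hjne x).1 m
      = ν m := by
    show swapFun p q x.1 ν x m = ν m
    unfold swapFun
    rw [if_pos hxCyl]
    exact if_pos (by omega : m ≤ q)
  rw [hcontra] at heval
  exact hjne heval

end Aux4
section Aux5

variable {N : ℕ} {A : Fin N → Fin N → Bool}

lemma fix_compl_maps_to {e : ShiftSpace A ≃ₜ ShiftSpace A} {s : Set (ShiftSpace A)}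
    (h : ∀ z ∉ s, e z = z) {x : ShiftSpace A} (hx : x ∈ s) : e x ∈ s := by
  by_contra hc
  have h1 : e (e x) = e x := h _ hc
  have h2 : e x = x := e.injective h1
  rw [h2] at hc
  exact hc hx

lemma commute_of_disjoint {γ ξ : ShiftSpace A ≃ₜ ShiftSpace A} {O : Set (ShiftSpace A)}
    (hγ : ∀ z ∉ O, γ z = z) (hξ : ∀ z ∈ closure O, ξ z = z) : ξ * γ = γ * ξ := by
  apply Homeomorph.ext
  intro x
  simp only [homeo_mul_apply]
  by_cases hx : x ∈ O
  · rw [hξ _ (subset_closure (fix_compl_maps_to hγ hx)), hξ x (subset_closure hx)]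
  · by_cases hx2 : x ∈ closure O
    · rw [hγ x hx, hξ x hx2, hγ x hx]
    · have hξx : ξ x ∉ closure O :=
        fix_compl_maps_to (s := (closure O)ᶜ) (fun z hz => hξ z (not_not.mp hz)) hx2
      rw [hγ x hx, hγ (ξ x) (fun h => hξx (subset_closure h))]

lemma commutant_localGroup_eq (hA : MatrixIrreducible A) (hI : ConditionI A)
    (O : Set (ShiftSpace A)) (hO : IsOpen O) :
    commutant A ↑(localGroup A O) = ↑(localGroup A ((closure O)ᶜ)) := by
  ext ξ
  constructor
  · rintro ⟨hξfull, hcomm⟩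
    refine ⟨hξfull, ?_⟩
    intro z hz
    have hfix : ∀ u ∈ O, ξ u = u := by
      intro u hu
      by_contra hne
      obtain ⟨W₁, W₂, hW₁, hW₂, hξuW₁, huW₂, hdisj⟩ := t2_separation hne
      set V := O ∩ W₂ ∩ ξ ⁻¹' W₁ with hVdef
      have hVopen : IsOpen V := (hO.inter hW₂).inter (hW₁.preimage ξ.continuous)
      have huV : u ∈ V := ⟨⟨hu, huW₂⟩, hξuW₁⟩
      obtain ⟨γ, hγV, hγu⟩ := exists_local_move hA hI hVopen huV
      have hγO : γ ∈ localGroup A O :=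
        ⟨hγV.1, fun w hw => hγV.2 w (fun hwV => hw hwV.1.1)⟩
      have hcγ := hcomm γ hγO
      have heval : ξ (γ u) = γ (ξ u) := by
        have := congrArg (fun f : ShiftSpace A ≃ₜ ShiftSpace A => f u) hcγ
        simpa using this
      have hξuV : ξ u ∉ V := fun hmem => (Set.disjoint_left.mp hdisj hξuW₁) hmem.1.2
      rw [hγV.2 (ξ u) hξuV] at heval
      exact hγu (ξ.injective heval)
    have hclosed : IsClosed {w : ShiftSpace A | ξ w = w} :=
      isClosed_eq ξ.continuous continuous_id
    exact closure_minimal hfix hclosed (not_not.mp hz)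
  · rintro ⟨hξfull, hξfix⟩
    exact ⟨hξfull, fun γ hγ =>
      commute_of_disjoint hγ.2 (fun z hz => hξfix z (not_not_intro hz))⟩

end Aux5

theorem stmt6 {N : ℕ} (hN : 1 < N) (A : Fin N → Fin N → Bool)
    (hA : MatrixIrreducible A) (hI : ConditionI A)
    (O O₁ O₂ : Set (ShiftSpace A)) (hO : IsOpen O) (hO₁ : IsOpen O₁) (hO₂ : IsOpen O₂) :
    (O₁ ⊆ O₂ ↔ localGroup A O₁ ≤ localGroup A O₂) ∧
    (localGroup A O ⊓ localGroup A ((closure O)ᶜ) = ⊥) ∧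
    (commutant A ↑(localGroup A O) = ↑(localGroup A ((closure O)ᶜ)) ∧
      (localGroup A O : Set (ShiftSpace A ≃ₜ ShiftSpace A)) ⊆
        commutant A (commutant A ↑(localGroup A O))) ∧
    (interior (closure O) = O →
      (localGroup A O : Set (ShiftSpace A ≃ₜ ShiftSpace A)) =
        commutant A (commutant A ↑(localGroup A O))) := by
  refine ⟨⟨fun h γ hγ => ⟨hγ.1, fun z hz => hγ.2 z (fun hz1 => hz (h hz1))⟩, ?_⟩, ?_, ⟨?_, ?_⟩, ?_⟩
  · -- Γ_{O₁} ≤ Γ_{O₂} → O₁ ⊆ O₂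
    intro h x hx₁
    by_contra hx₂
    obtain ⟨γ, hγ, hγx⟩ := exists_local_move hA hI hO₁ hx₁
    exact hγx ((h hγ).2 x hx₂)
  · -- Γ_O ⊓ Γ_{O^⊥} = ⊥
    rw [eq_bot_iff]
    intro γ hγ
    obtain ⟨h1, h2⟩ := Subgroup.mem_inf.mp hγ
    rw [Subgroup.mem_bot]
    apply Homeomorph.ext
    intro x
    by_cases hx : x ∈ closure O
    · exact h2.2 x (not_not_intro hx)
    · exact h1.2 x (fun h => hx (subset_closure h))
  · exact commutant_localGroup_eq hA hI O hO
  · -- Γ_O ⊆ Γ_O''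
    intro γ hγ
    exact ⟨hγ.1, fun ξ hξ => (hξ.2 γ hγ).symm⟩
  · -- regular open case
    intro hreg
    rw [commutant_localGroup_eq hA hI O hO,
      commutant_localGroup_eq hA hI ((closure O)ᶜ) isClosed_closure.isOpen_compl,
      closure_compl, compl_compl, hreg]
end

section
/- If O is a regular open subset of X_A, then the pair (Γ_O, Γ_{O^⊥}) is a strong commuting pair: Γ_O^⊥ = Γ_{O^⊥}, Γ_{O^⊥}^⊥ = Γ_O, Γ_O ∩ Γ_{O^⊥} = {id}, and every nontrivial normal subgroup N of Γ_O satisfies N^⊥ = Γ_{O^⊥} (and symmetrically for Γ_{O^⊥}). -/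
open Set

/-- A strong commuting pair of subgroups of `Γ_A`: conditions (D1) and (D2). -/
def IsStrongCommutingPair {N : ℕ} (A : Fin N → Fin N → Bool)
    (H K : Subgroup (ShiftSpace A ≃ₜ ShiftSpace A)) : Prop :=
  H ≤ fullGroup A ∧ K ≤ fullGroup A ∧
  commutant A ↑H = ↑K ∧ commutant A ↑K = ↑H ∧ H ⊓ K = ⊥ ∧
  (∀ M : Subgroup (ShiftSpace A ≃ₜ ShiftSpace A), M ≤ H → M ≠ ⊥ →
    (∀ h ∈ H, ∀ n ∈ M, h * n * h⁻¹ ∈ M) → commutant A ↑M = ↑K) ∧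
  (∀ M : Subgroup (ShiftSpace A ≃ₜ ShiftSpace A), M ≤ K → M ≠ ⊥ →
    (∀ h ∈ K, ∀ n ∈ M, h * n * h⁻¹ ∈ M) → commutant A ↑M = ↑H)

section Aux

open Set

namespace ShiftAux

variable {N : ℕ} {A : Fin N → Fin N → Bool}

/-! ### Cylinders -/

def cyl (x : ShiftSpace A) (m : ℕ) : Set (ShiftSpace A) := {z | ∀ i < m, z.1 i = x.1 i}

instance cylDec (x : ShiftSpace A) (m : ℕ) : DecidablePred (· ∈ cyl x m) :=
  fun z => Nat.decidableBallLT m fun i _ => z.1 i = x.1 i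

lemma mem_cyl_self (x : ShiftSpace A) (m : ℕ) : x ∈ cyl x m := fun _ _ => rfl

lemma cyl_mono {x : ShiftSpace A} {m m' : ℕ} (h : m ≤ m') : cyl x m' ⊆ cyl x m :=
  fun _ hz i hi => hz i (lt_of_lt_of_le hi h)

lemma isClopen_cyl (x : ShiftSpace A) (m : ℕ) : IsClopen (cyl x m) := by
  have he : cyl x m = ⋂ i ∈ Finset.range m, (fun z : ShiftSpace A => z.1 i) ⁻¹' {x.1 i} := by
    ext z; simp [cyl, Finset.mem_range]
  rw [he]
  exact isClopen_biInter_finset fun i _ =>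
    (isClopen_discrete _).preimage ((continuous_apply i).comp continuous_subtype_val)

lemma exists_cyl_subset {U : Set (ShiftSpace A)} (hU : IsOpen U) {x : ShiftSpace A}
    (hx : x ∈ U) : ∃ m, 0 < m ∧ cyl x m ⊆ U := by
  by_contra h
  push_neg at h
  have h' : ∀ m : ℕ, ∃ z, z ∈ cyl x (m+1) ∧ z ∉ U := by
    intro m
    obtain ⟨z, hz1, hz2⟩ := not_subset.1 (h (m+1) (Nat.succ_pos m))
    exact ⟨z, hz1, hz2⟩
  choose y hy1 hy2 using h'
  have htd : Filter.Tendsto y Filter.atTop (nhds x) := by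
    rw [nhds_subtype_eq_comap, Filter.tendsto_comap_iff]
    rw [tendsto_pi_nhds]
    intro j
    refine Filter.Tendsto.congr' ?_ tendsto_const_nhds
    filter_upwards [Filter.eventually_ge_atTop j] with k hk
    exact (hy1 k j (by omega)).symm
  obtain ⟨k, hk⟩ := (htd.eventually_mem (hU.mem_nhds hx)).exists
  exact hy2 k hk

lemma cantor_singleton_not_open (c : ℕ → Bool) : ¬ IsOpen ({c} : Set (ℕ → Bool)) := by
  intro h
  have htd : Filter.Tendsto (fun k => Function.update c k (!(c k))) Filter.atTop (nhds c) := by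
    rw [tendsto_pi_nhds]
    intro j
    refine Filter.Tendsto.congr' ?_ tendsto_const_nhds
    filter_upwards [Filter.eventually_ge_atTop (j+1)] with k hk
    rw [Function.update_of_ne (by omega)]
  obtain ⟨k, hk⟩ := (htd.eventually_mem (h.mem_nhds rfl)).exists
  have := congrFun hk k
  simp [Function.update_self] at this

lemma exists_ne_mem_cyl (hI : ConditionI A)
    (x : ShiftSpace A) (m : ℕ) : ∃ y, y ≠ x ∧ y ∈ cyl x m := by
  by_contra h
  push_neg at h
  have hcyl : cyl x m = {x} := by
    apply Subset.antisymm
    · intro z hz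
      by_contra hne
      exact (h z (fun he => hne (by simp [he]))) hz
    · intro z hz; rw [hz]; exact mem_cyl_self x m
  have hopen : IsOpen ({x} : Set (ShiftSpace A)) := hcyl ▸ (isClopen_cyl x m).2
  obtain ⟨e⟩ := hI
  have : IsOpen ({e x} : Set (ℕ → Bool)) := by
    have := e.isOpenMap _ hopen
    rwa [Set.image_singleton] at this
  exact cantor_singleton_not_open (e x) this

/-! ### The swap construction -/

lemma shift_iter_coe (n : ℕ) (z : ShiftSpace A) (i : ℕ) :
    ((shiftMap A)^[n] z).1 i = z.1 (i + n) := by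
  induction n generalizing z with
  | zero => rfl
  | succ k ih =>
    rw [Function.iterate_succ_apply, ih (shiftMap A z)]
    show z.1 (i + k + 1) = z.1 (i + (k+1))
    congr 1

def glueFun (w : ℕ → Fin N) (m : ℕ) (t : ℕ → Fin N) : ℕ → Fin N :=
  fun i => if i < m then w i else t (i - m)

def swapRaw (ζ η : ShiftSpace A) (n m : ℕ) : ShiftSpace A → ℕ → Fin N :=
  fun z =>
    if z ∈ cyl ζ n then glueFun η.1 m (fun i => z.1 (i+n))
    else if z ∈ cyl η m then glueFun ζ.1 n (fun i => z.1 (i+m))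
    else z.1

lemma swapRaw_eq1 {ζ η : ShiftSpace A} {n m : ℕ} {z : ShiftSpace A} (h : z ∈ cyl ζ n) (j : ℕ) :
    swapRaw ζ η n m z j = if j < m then η.1 j else z.1 (j - m + n) := by
  simp only [swapRaw, if_pos h, glueFun]

lemma swapRaw_eq2 {ζ η : ShiftSpace A} {n m : ℕ} {z : ShiftSpace A} (h1 : z ∉ cyl ζ n)
    (h2 : z ∈ cyl η m) (j : ℕ) :
    swapRaw ζ η n m z j = if j < n then ζ.1 j else z.1 (j - n + m) := by
  simp only [swapRaw, if_neg h1, if_pos h2, glueFun]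

lemma swapRaw_eq3 {ζ η : ShiftSpace A} {n m : ℕ} {z : ShiftSpace A} (h1 : z ∉ cyl ζ n)
    (h2 : z ∉ cyl η m) : swapRaw ζ η n m z = z.1 := by
  simp only [swapRaw, if_neg h1, if_neg h2]

lemma glue_adm (w : ShiftSpace A) (k : ℕ) (hk : 0 < k) (t : ℕ → Fin N)
    (ht : ∀ i, A (t i) (t (i+1)) = true) (h0 : A (w.1 (k-1)) (t 0) = true) :
    ∀ i, A (glueFun w.1 k t i) (glueFun w.1 k t (i+1)) = true := by
  intro i
  unfold glueFun
  by_cases h1 : i + 1 < k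
  · rw [if_pos (by omega), if_pos h1]; exact w.2 i
  by_cases h2 : i + 1 = k
  · rw [if_pos (by omega), if_neg (by omega),
      show i + 1 - k = 0 from by omega, show i = k - 1 from by omega]
    exact h0
  · rw [if_neg (by omega), if_neg (by omega),
      show i + 1 - k = (i - k) + 1 from by omega]
    exact ht (i - k)

lemma swapRaw_adm (ζ η : ShiftSpace A) (n m : ℕ) (hn : 0 < n) (hm : 0 < m)
    (hlast : ζ.1 (n-1) = η.1 (m-1)) (z : ShiftSpace A) :
    ∀ i, A (swapRaw ζ η n m z i) (swapRaw ζ η n m z (i+1)) = true := by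
  have tail_adm : ∀ (k : ℕ) (i : ℕ), A (z.1 (i+k)) (z.1 (i+1+k)) = true := by
    intro k i
    rw [show i + 1 + k = (i + k) + 1 from by omega]; exact z.2 (i+k)
  intro i
  unfold swapRaw
  by_cases h1 : z ∈ cyl ζ n
  · rw [if_pos h1]
    refine glue_adm η m hm _ (fun j => tail_adm n j) ?_ i
    rw [← hlast, show (0+n) = (n-1)+1 from by omega, ← h1 (n-1) (by omega)]
    exact z.2 (n-1)
  by_cases h2 : z ∈ cyl η m
  · rw [if_neg h1, if_pos h2]
    refine glue_adm ζ n hn _ (fun j => tail_adm m j) ?_ i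
    rw [hlast, show (0+m) = (m-1)+1 from by omega, ← h2 (m-1) (by omega)]
    exact z.2 (m-1)
  · rw [if_neg h1, if_neg h2]; exact z.2 i

def swapF (ζ η : ShiftSpace A) (n m : ℕ) (hn : 0 < n) (hm : 0 < m)
    (hlast : ζ.1 (n-1) = η.1 (m-1)) : ShiftSpace A → ShiftSpace A :=
  fun z => ⟨swapRaw ζ η n m z, swapRaw_adm ζ η n m hn hm hlast z⟩

lemma frontier_clopen {α : Type*} [TopologicalSpace α] {s : Set α} (hs : IsClopen s) :
    frontier s = ∅ := by
  rw [frontier, hs.isClosed.closure_eq, hs.isOpen.interior_eq, diff_self]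

lemma swap_exists (ζ η : ShiftSpace A) (n m : ℕ) (hn : 0 < n) (hm : 0 < m)
    (hlast : ζ.1 (n-1) = η.1 (m-1))
    (hdisj : ∀ z, z ∈ cyl ζ n → z ∉ cyl η m) :
    ∃ γ : ShiftSpace A ≃ₜ ShiftSpace A, γ ∈ fullGroup A ∧
      (∀ z, γ z ≠ z → z ∈ cyl ζ n ∨ z ∈ cyl η m) ∧
      (∀ z ∈ cyl ζ n, γ z ∈ cyl η m) ∧ (∀ z ∈ cyl η m, γ z ∈ cyl ζ n) := by
  set F := swapF ζ η n m hn hm hlast with hFdef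
  have hcoe : ∀ z, (F z).1 = swapRaw ζ η n m z := fun z => rfl
  -- membership facts
  have hF1 : ∀ z ∈ cyl ζ n, F z ∈ cyl η m := by
    intro z hz i hi
    show swapRaw ζ η n m z i = η.1 i
    rw [swapRaw_eq1 hz, if_pos hi]
  have hF2 : ∀ z, z ∉ cyl ζ n → z ∈ cyl η m → F z ∈ cyl ζ n := by
    intro z h1 h2 i hi
    show swapRaw ζ η n m z i = ζ.1 i
    rw [swapRaw_eq2 h1 h2, if_pos hi]
  have hF3 : ∀ z, z ∉ cyl ζ n → z ∉ cyl η m → F z = z := by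
    intro z h1 h2
    exact Subtype.ext (swapRaw_eq3 h1 h2)
  -- involution
  have hinv : ∀ z, F (F z) = z := by
    intro z
    by_cases h1 : z ∈ cyl ζ n
    · have hm1 : F z ∈ cyl η m := hF1 z h1
      have hm2 : F z ∉ cyl ζ n := fun hc => hdisj _ hc hm1
      apply Subtype.ext; funext i
      show swapRaw ζ η n m (F z) i = z.1 i
      rw [swapRaw_eq2 hm2 hm1]
      by_cases hi : i < n
      · rw [if_pos hi]; exact (h1 i hi).symm
      · rw [if_neg hi]
        show swapRaw ζ η n m z (i - n + m) = z.1 i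
        rw [swapRaw_eq1 h1, if_neg (by omega), show i - n + m - m + n = i from by omega]
    · by_cases h2 : z ∈ cyl η m
      · have hm1 : F z ∈ cyl ζ n := hF2 z h1 h2
        have hm2 : F z ∉ cyl η m := hdisj _ hm1
        apply Subtype.ext; funext i
        show swapRaw ζ η n m (F z) i = z.1 i
        rw [swapRaw_eq1 hm1]
        by_cases hi : i < m
        · rw [if_pos hi]; exact (h2 i hi).symm
        · rw [if_neg hi]
          show swapRaw ζ η n m z (i - m + n) = z.1 i
          rw [swapRaw_eq2 h1 h2, if_neg (by omega), show i - m + n - n + m = i from by omega]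
      · rw [hF3 z h1 h2, hF3 z h1 h2]
  -- continuity
  have hcont : Continuous F := by
    apply Continuous.subtype_mk
    apply continuous_pi
    intro j
    have he : (fun z => swapRaw ζ η n m z j) =
        fun z : ShiftSpace A => if z ∈ cyl ζ n then (if j < m then η.1 j else z.1 (j - m + n))
          else if z ∈ cyl η m then (if j < n then ζ.1 j else z.1 (j - n + m)) else z.1 j := by
      funext z
      by_cases h1 : z ∈ cyl ζ n
      · rw [if_pos h1, swapRaw_eq1 h1]
      by_cases h2 : z ∈ cyl η m
      · rw [if_neg h1, if_pos h2, swapRaw_eq2 h1 h2]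
      · rw [if_neg h1, if_neg h2, swapRaw_eq3 h1 h2]
    show Continuous fun z => swapRaw ζ η n m z j
    rw [he]
    have hbr1 : Continuous fun z : ShiftSpace A => if j < m then η.1 j else z.1 (j - m + n) := by
      by_cases hj : j < m
      · simp only [if_pos hj]; exact continuous_const
      · simp only [if_neg hj]; exact (continuous_apply (j - m + n)).comp continuous_subtype_val
    have hbr2 : Continuous fun z : ShiftSpace A => if j < n then ζ.1 j else z.1 (j - n + m) := by
      by_cases hj : j < n
      · simp only [if_pos hj]; exact continuous_const
      · simp only [if_neg hj]; exact (continuous_apply (j - n + m)).comp continuous_subtype_val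
    have hbr3 : Continuous fun z : ShiftSpace A => z.1 j :=
      (continuous_apply j).comp continuous_subtype_val
    refine continuous_if ?_ hbr1.continuousOn ?_
    · intro a ha
      rw [Set.setOf_mem_eq, frontier_clopen (isClopen_cyl ζ n)] at ha
      exact absurd ha (Set.notMem_empty a)
    · refine Continuous.continuousOn ?_
      refine continuous_if ?_ hbr2.continuousOn hbr3.continuousOn
      intro a ha
      rw [Set.setOf_mem_eq, frontier_clopen (isClopen_cyl η m)] at ha
      exact absurd ha (Set.notMem_empty a)
  refine ⟨⟨⟨F, F, hinv, hinv⟩, hcont, hcont⟩, ?_, ?_, hF1, ?_⟩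
  · -- full group membership
    refine ⟨fun z => if z ∈ cyl ζ n then m else if z ∈ cyl η m then n else 0,
      fun z => if z ∈ cyl ζ n then n else if z ∈ cyl η m then m else 0, ?_, ?_, ?_⟩
    · refine continuous_if ?_ continuous_const.continuousOn
        (Continuous.continuousOn (continuous_if ?_ continuous_const.continuousOn
          continuous_const.continuousOn))
      · intro a ha
        rw [Set.setOf_mem_eq, frontier_clopen (isClopen_cyl ζ n)] at ha
        exact absurd ha (Set.notMem_empty a)
      · intro a ha
        rw [Set.setOf_mem_eq, frontier_clopen (isClopen_cyl η m)] at ha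
        exact absurd ha (Set.notMem_empty a)
    · refine continuous_if ?_ continuous_const.continuousOn
        (Continuous.continuousOn (continuous_if ?_ continuous_const.continuousOn
          continuous_const.continuousOn))
      · intro a ha
        rw [Set.setOf_mem_eq, frontier_clopen (isClopen_cyl ζ n)] at ha
        exact absurd ha (Set.notMem_empty a)
      · intro a ha
        rw [Set.setOf_mem_eq, frontier_clopen (isClopen_cyl η m)] at ha
        exact absurd ha (Set.notMem_empty a)
    · intro z
      by_cases h1 : z ∈ cyl ζ n
      · simp only [if_pos h1]
        apply Subtype.ext; funext i
        rw [shift_iter_coe, shift_iter_coe]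
        show swapRaw ζ η n m z (i+m) = z.1 (i+n)
        rw [swapRaw_eq1 h1, if_neg (by omega), show i + m - m + n = i + n from by omega]
      by_cases h2 : z ∈ cyl η m
      · simp only [if_neg h1, if_pos h2]
        apply Subtype.ext; funext i
        rw [shift_iter_coe, shift_iter_coe]
        show swapRaw ζ η n m z (i+n) = z.1 (i+m)
        rw [swapRaw_eq2 h1 h2, if_neg (by omega), show i + n - n + m = i + m from by omega]
      · simp only [if_neg h1, if_neg h2]
        show (shiftMap A)^[0] (F z) = (shiftMap A)^[0] z
        rw [Function.iterate_zero_apply, Function.iterate_zero_apply, hF3 z h1 h2]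
  · -- support
    intro z hz
    by_contra hc
    push_neg at hc
    exact hz (hF3 z hc.1 hc.2)
  · exact fun z hz => by
      by_cases h1 : z ∈ cyl ζ n
      · exact absurd hz (hdisj z h1)
      · exact hF2 z h1 hz

/-! ### Local moves and transport -/

def braidFun (y x : ShiftSpace A) (p c : ℕ) (w' : ℕ → Fin N) : ℕ → Fin N :=
  fun i => if i ≤ p then y.1 i else if i ≤ p + c then w' (i-p) else x.1 (i-c)

lemma braidFun_1 {y x : ShiftSpace A} {p c : ℕ} {w' : ℕ → Fin N} {i : ℕ} (h : i ≤ p) :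
    braidFun y x p c w' i = y.1 i := if_pos h

lemma braidFun_2 {y x : ShiftSpace A} {p c : ℕ} {w' : ℕ → Fin N} {i : ℕ} (h1 : ¬ i ≤ p)
    (h2 : i ≤ p + c) : braidFun y x p c w' i = w' (i-p) := by
  rw [braidFun, if_neg h1, if_pos h2]

lemma braidFun_3 {y x : ShiftSpace A} {p c : ℕ} {w' : ℕ → Fin N} {i : ℕ} (h1 : ¬ i ≤ p)
    (h2 : ¬ i ≤ p + c) : braidFun y x p c w' i = x.1 (i-c) := by
  rw [braidFun, if_neg h1, if_neg h2]

lemma localMove (hA : MatrixIrreducible A) (hI : ConditionI A) (x : ShiftSpace A) (m : ℕ) :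
    ∃ γ : ShiftSpace A ≃ₜ ShiftSpace A, γ ∈ fullGroup A ∧
      (∀ z, γ z ≠ z → z ∈ cyl x m) ∧ γ x ≠ x := by
  obtain ⟨y, hyne, hymem⟩ := exists_ne_mem_cyl hI x (max m 1)
  have hex : ∃ p, y.1 p ≠ x.1 p := by
    by_contra hc; push_neg at hc; exact hyne (Subtype.ext (funext hc))
  have hp : y.1 (Nat.find hex) ≠ x.1 (Nat.find hex) := Nat.find_spec hex
  set p := Nat.find hex with hpdef
  have hmin : ∀ i < p, y.1 i = x.1 i := fun i hi => of_not_not (Nat.find_min hex hi)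
  have hpm' : max m 1 ≤ p := by
    by_contra hc; push_neg at hc; exact hp (hymem p hc)
  have hmp : m ≤ p := le_trans (le_max_left m 1) hpm'
  have hp1 : 1 ≤ p := le_trans (le_max_right m 1) hpm'
  obtain ⟨c, hc0, w', hw0, hwc, hwadm⟩ := hA (y.1 p) (x.1 p)
  have hadm : ∀ i, A (braidFun y x p c w' i) (braidFun y x p c w' (i+1)) = true := by
    intro i
    by_cases h1 : i + 1 ≤ p
    · rw [braidFun_1 (by omega), braidFun_1 h1]; exact y.2 i
    by_cases h3 : i ≤ p
    · have hip : i = p := by omega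
      subst hip
      rw [braidFun_1 h3, braidFun_2 (by omega) (by omega),
        show p + 1 - p = 1 from by omega, ← hw0]
      exact hwadm 0 hc0
    by_cases h2 : i + 1 ≤ p + c
    · rw [braidFun_2 (by omega) (by omega), braidFun_2 (by omega) h2,
        show i + 1 - p = (i - p) + 1 from by omega]
      exact hwadm (i-p) (by omega)
    by_cases h4 : i ≤ p + c
    · have hip : i = p + c := by omega
      subst hip
      rw [braidFun_2 (by omega) h4, braidFun_3 (by omega) (by omega),
        show p + c - p = c from by omega, hwc, show p + c + 1 - c = p + 1 from by omega]
      exact x.2 p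
    · rw [braidFun_3 (by omega) (by omega), braidFun_3 (by omega) (by omega),
        show i + 1 - c = (i - c) + 1 from by omega]
      exact x.2 (i-c)
  set η : ShiftSpace A := ⟨braidFun y x p c w', hadm⟩ with hηdef
  have hηcoe : ∀ i, η.1 i = braidFun y x p c w' i := fun _ => rfl
  have hlast : x.1 (p + 1 - 1) = η.1 (p + c + 1 - 1) := by
    rw [show p + 1 - 1 = p from by omega, show p + c + 1 - 1 = p + c from by omega,
      hηcoe, braidFun_2 (by omega) (by omega), show p + c - p = c from by omega, hwc]
  have hdisj : ∀ z, z ∈ cyl x (p+1) → z ∉ cyl η (p+c+1) := by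
    intro z hz hz2
    have e1 := hz p (by omega)
    have e2 := hz2 p (by omega)
    rw [hηcoe, braidFun_1 (le_refl p)] at e2
    exact hp (by rw [← e2, e1])
  obtain ⟨γ, hγfull, hγsupp, hγ1, _⟩ :=
    swap_exists x η (p+1) (p+c+1) (by omega) (by omega) hlast hdisj
  refine ⟨γ, hγfull, ?_, ?_⟩
  · intro z hz
    rcases hγsupp z hz with h | h
    · exact cyl_mono (by omega) h
    · intro i hi
      rw [h i (by omega), hηcoe, braidFun_1 (by omega)]
      exact hmin i (by omega)
  · have hx : γ x ∈ cyl η (p+c+1) := hγ1 x (mem_cyl_self x (p+1))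
    intro he
    have e := hx p (by omega)
    rw [he, hηcoe, braidFun_1 (le_refl p)] at e
    exact hp e.symm

def pathFun (x z : ShiftSpace A) (m c k : ℕ) (w' : ℕ → Fin N) : ℕ → Fin N :=
  fun i => if i ≤ m then x.1 i else if i ≤ m + c then w' (i-m) else z.1 (i-m-c+k)

lemma pathFun_1 {x z : ShiftSpace A} {m c k : ℕ} {w' : ℕ → Fin N} {i : ℕ} (h : i ≤ m) :
    pathFun x z m c k w' i = x.1 i := if_pos h

lemma pathFun_2 {x z : ShiftSpace A} {m c k : ℕ} {w' : ℕ → Fin N} {i : ℕ} (h1 : ¬ i ≤ m)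
    (h2 : i ≤ m + c) : pathFun x z m c k w' i = w' (i-m) := by
  rw [pathFun, if_neg h1, if_pos h2]

lemma pathFun_3 {x z : ShiftSpace A} {m c k : ℕ} {w' : ℕ → Fin N} {i : ℕ} (h1 : ¬ i ≤ m)
    (h2 : ¬ i ≤ m + c) : pathFun x z m c k w' i = z.1 (i-m-c+k) := by
  rw [pathFun, if_neg h1, if_neg h2]

lemma transport (hA : MatrixIrreducible A) (x z : ShiftSpace A) (m k : ℕ)
    (hdisj : ∀ w ∈ cyl x (m+1), w ∉ cyl z (k+1)) :
    ∃ γ : ShiftSpace A ≃ₜ ShiftSpace A, γ ∈ fullGroup A ∧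
      (∀ w, γ w ≠ w → w ∈ cyl x (m+1) ∨ w ∈ cyl z (k+1)) ∧ γ z ∈ cyl x (m+1) := by
  obtain ⟨c, hc0, w', hw0, hwc, hwadm⟩ := hA (x.1 m) (z.1 k)
  have hadm : ∀ i, A (pathFun x z m c k w' i) (pathFun x z m c k w' (i+1)) = true := by
    intro i
    by_cases h1 : i + 1 ≤ m
    · rw [pathFun_1 (by omega), pathFun_1 h1]; exact x.2 i
    by_cases h3 : i ≤ m
    · have hip : i = m := by omega
      have e1 : pathFun x z m c k w' i = x.1 m := by rw [pathFun_1 h3, hip]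
      have e2 : pathFun x z m c k w' (i+1) = w' 1 := by
        rw [pathFun_2 (by omega) (by omega), show i + 1 - m = 1 from by omega]
      rw [e1, e2, ← hw0]
      exact hwadm 0 hc0
    by_cases h2 : i + 1 ≤ m + c
    · rw [pathFun_2 (by omega) (by omega), pathFun_2 (by omega) h2,
        show i + 1 - m = (i - m) + 1 from by omega]
      exact hwadm (i-m) (by omega)
    by_cases h4 : i ≤ m + c
    · have e1 : pathFun x z m c k w' i = z.1 k := by
        rw [pathFun_2 (by omega) h4, show i - m = c from by omega, hwc]
      have e2 : pathFun x z m c k w' (i+1) = z.1 (k+1) := by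
        rw [pathFun_3 (by omega) (by omega), show i + 1 - m - c + k = k + 1 from by omega]
      rw [e1, e2]
      exact z.2 k
    · rw [pathFun_3 (by omega) (by omega), pathFun_3 (by omega) (by omega),
        show i + 1 - m - c + k = (i - m - c + k) + 1 from by omega]
      exact z.2 (i-m-c+k)
  set η : ShiftSpace A := ⟨pathFun x z m c k w', hadm⟩ with hηdef
  have hηcoe : ∀ i, η.1 i = pathFun x z m c k w' i := fun _ => rfl
  have hsub : cyl η (m+c+1) ⊆ cyl x (m+1) := by
    intro w hw i hi
    rw [hw i (by omega), hηcoe, pathFun_1 (by omega)]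
  have hlast : z.1 (k + 1 - 1) = η.1 (m + c + 1 - 1) := by
    rw [show k + 1 - 1 = k from by omega, show m + c + 1 - 1 = m + c from by omega,
      hηcoe, pathFun_2 (by omega) (by omega), show m + c - m = c from by omega, hwc]
  have hdisj' : ∀ w, w ∈ cyl z (k+1) → w ∉ cyl η (m+c+1) := by
    intro w hw hw2
    exact hdisj w (hsub hw2) hw
  obtain ⟨γ, hγfull, hγsupp, hγ1, _⟩ :=
    swap_exists z η (k+1) (m+c+1) (by omega) (by omega) hlast hdisj'
  refine ⟨γ, hγfull, ?_, ?_⟩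
  · intro w hw
    rcases hγsupp w hw with h | h
    · exact Or.inr h
    · exact Or.inl (hsub h)
  · exact hsub (hγ1 z (mem_cyl_self z (k+1)))

/-! ### Group lemmas -/

lemma mem_localGroup_iff {O : Set (ShiftSpace A)} {γ : ShiftSpace A ≃ₜ ShiftSpace A} :
    γ ∈ localGroup A O ↔ γ ∈ fullGroup A ∧ ∀ x ∉ O, γ x = x := Iff.rfl

lemma homeo_mul_eq_apply {γ ξ : ShiftSpace A ≃ₜ ShiftSpace A} (h : ξ * γ = γ * ξ)
    (w : ShiftSpace A) : ξ (γ w) = γ (ξ w) :=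
  congrArg (fun f : ShiftSpace A ≃ₜ ShiftSpace A => f w) h

lemma apply_inv_apply (γ : ShiftSpace A ≃ₜ ShiftSpace A) (w : ShiftSpace A) :
    γ (γ⁻¹ w) = w := γ.apply_symm_apply w

lemma inv_apply_apply (γ : ShiftSpace A ≃ₜ ShiftSpace A) (w : ShiftSpace A) :
    γ⁻¹ (γ w) = w := γ.symm_apply_apply w

lemma fix_inv {γ : ShiftSpace A ≃ₜ ShiftSpace A} {w : ShiftSpace A} (h : γ w = w) :
    γ⁻¹ w = w := by
  have h2 := congrArg γ.symm h
  rw [γ.symm_apply_apply] at h2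
  show γ.symm w = w
  exact h2.symm

lemma maps_mem {γ : ShiftSpace A ≃ₜ ShiftSpace A} {S : Set (ShiftSpace A)}
    (hfix : ∀ v, v ∉ S → γ v = v) {w : ShiftSpace A} (hw : w ∈ S) : γ w ∈ S := by
  by_contra h
  have h2 := hfix _ h
  have h3 := γ.injective h2
  rw [h3] at h
  exact h hw

lemma commute_of_disjoint {γ ξ : ShiftSpace A ≃ₜ ShiftSpace A} {S T : Set (ShiftSpace A)}
    (hγ : ∀ v, v ∉ S → γ v = v) (hξ : ∀ v, v ∉ T → ξ v = v)
    (hd : ∀ v, v ∈ S → v ∉ T) : ξ * γ = γ * ξ := by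
  apply Homeomorph.ext
  intro w
  show ξ (γ w) = γ (ξ w)
  by_cases hwS : w ∈ S
  · have h1 : γ w ∈ S := maps_mem hγ hwS
    rw [hξ _ (hd _ h1), hξ _ (hd _ hwS)]
  · by_cases hwT : w ∈ T
    · have h1 : ξ w ∈ T := maps_mem hξ hwT
      have h2 : ξ w ∉ S := fun hc => hd _ hc h1
      rw [hγ _ hwS, hγ _ h2]
    · rw [hγ _ hwS, hξ _ hwT, hγ _ hwS]

lemma sep_cyl {U : Set (ShiftSpace A)} (hU : IsOpen U) {x : ShiftSpace A} (hx : x ∈ U)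
    {ξ : ShiftSpace A ≃ₜ ShiftSpace A} (hne : ξ x ≠ x) :
    ∃ m, cyl x m ⊆ U ∧ ∀ w ∈ cyl x m, ξ w ∉ cyl x m := by
  have hj : ∃ j, (ξ x).1 j ≠ x.1 j := by
    by_contra hc; push_neg at hc; exact hne (Subtype.ext (funext hc))
  obtain ⟨j, hj⟩ := hj
  obtain ⟨m0, _, hm0⟩ := exists_cyl_subset hU hx
  have hsub1 : cyl x (max m0 (j+1)) ⊆ U := (cyl_mono (le_max_left _ _)).trans hm0
  have hV : IsOpen (ξ ⁻¹' (cyl x (max m0 (j+1)))ᶜ) :=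
    ((isClopen_cyl x (max m0 (j+1))).compl.2).preimage ξ.continuous
  have hxV : x ∈ ξ ⁻¹' (cyl x (max m0 (j+1)))ᶜ := by
    have : ξ x ∉ cyl x (max m0 (j+1)) := fun hc => hj (hc j (by omega))
    exact this
  obtain ⟨m2, _, hm2⟩ := exists_cyl_subset hV hxV
  refine ⟨max (max m0 (j+1)) m2, (cyl_mono (le_max_left _ _)).trans hsub1, ?_⟩
  intro w hw hc
  have h1 : w ∈ cyl x m2 := cyl_mono (le_max_right _ _) hw
  have h2 := hm2 h1
  exact h2 (cyl_mono (le_max_left _ _) hc)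

lemma commutant_localGroup (hA : MatrixIrreducible A) (hI : ConditionI A)
    {U : Set (ShiftSpace A)} (hU : IsOpen U) :
    commutant A ↑(localGroup A U) = ↑(localGroup A ((closure U)ᶜ)) := by
  ext ξ
  constructor
  · rintro ⟨hξΓ, hcomm⟩
    have hfix : ∀ x ∈ U, ξ x = x := by
      intro x hx
      by_contra hne
      obtain ⟨m, hsub, hout⟩ := sep_cyl hU hx hne
      obtain ⟨γ, hγΓ, hγsupp, hγx⟩ := localMove hA hI x m
      have hγU : γ ∈ localGroup A U :=
        ⟨hγΓ, fun w hw => by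
          by_contra hne2
          exact hw (hsub (hγsupp w hne2))⟩
      have hc := homeo_mul_eq_apply (hcomm γ hγU) x
      have hξx : ξ x ∉ cyl x m := hout x (mem_cyl_self x m)
      have h2 : γ (ξ x) = ξ x := by
        by_contra hcc
        exact hξx (hγsupp _ hcc)
      rw [h2] at hc
      exact hγx (ξ.injective hc)
    have hcl : closure U ⊆ {w | ξ w = w} :=
      closure_minimal hfix (isClosed_eq ξ.continuous continuous_id)
    exact ⟨hξΓ, fun w hw => hcl (by simpa using hw)⟩
  · rintro ⟨hξΓ, hfix⟩
    exact ⟨hξΓ, fun γ hγ =>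
      commute_of_disjoint (mem_localGroup_iff.1 hγ).2 hfix
        (fun v hv hvc => hvc (subset_closure hv))⟩

lemma transport' (hA : MatrixIrreducible A) (x z : ShiftSpace A) (m k : ℕ)
    (hm : 0 < m) (hk : 0 < k) (hdisj : ∀ w ∈ cyl x m, w ∉ cyl z k) :
    ∃ γ : ShiftSpace A ≃ₜ ShiftSpace A, γ ∈ fullGroup A ∧
      (∀ w, γ w ≠ w → w ∈ cyl x m ∨ w ∈ cyl z k) ∧ γ z ∈ cyl x m := by
  have e1 : m - 1 + 1 = m := by omega
  have e2 : k - 1 + 1 = k := by omega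
  rw [← e1, ← e2] at hdisj ⊢
  exact transport hA x z (m-1) (k-1) hdisj

lemma strong_commutant (hA : MatrixIrreducible A) (hI : ConditionI A)
    {U : Set (ShiftSpace A)} (hU : IsOpen U)
    (M : Subgroup (ShiftSpace A ≃ₜ ShiftSpace A)) (hMU : M ≤ localGroup A U)
    (hMbot : M ≠ ⊥)
    (hnorm : ∀ h ∈ localGroup A U, ∀ n ∈ M, h * n * h⁻¹ ∈ M) :
    commutant A ↑M = ↑(localGroup A ((closure U)ᶜ)) := by
  ext ξ
  constructor
  · rintro ⟨hξΓ, hcomm⟩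
    have hfix : ∀ x ∈ U, ξ x = x := by
      intro x hx
      by_contra hne
      -- a nontrivial element of M
      obtain ⟨τ0, hτ0M, hτ0ne⟩ : ∃ τ ∈ M, τ ≠ 1 := by
        obtain ⟨⟨τ, hτM⟩, hτ⟩ := Subgroup.ne_bot_iff_exists_ne_one.1 hMbot
        exact ⟨τ, hτM, fun he => hτ (Subtype.ext he)⟩
      -- a point z ≠ x moved by τ0
      obtain ⟨z, hτz, hzx⟩ : ∃ z, τ0 z ≠ z ∧ z ≠ x := by
        obtain ⟨z0, hz0⟩ : ∃ z0, τ0 z0 ≠ z0 := by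
          by_contra hc; push_neg at hc
          exact hτ0ne (Homeomorph.ext fun w => hc w)
        by_cases hzx : z0 = x
        · subst hzx
          have hDopen : IsOpen {w : ShiftSpace A | τ0 w ≠ w} := by
            have hcl : IsClosed {w : ShiftSpace A | τ0 w = w} :=
              isClosed_eq τ0.continuous continuous_id
            exact hcl.isOpen_compl
          obtain ⟨mD, _, hmD⟩ := exists_cyl_subset hDopen hz0
          obtain ⟨y, hyne, hymem⟩ := exists_ne_mem_cyl hI z0 mD
          exact ⟨y, hmD hymem, hyne⟩
        · exact ⟨z0, hz0, hzx⟩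
      have hτ0U := hMU hτ0M
      have hzU : z ∈ U := by
        by_contra hc
        exact hτz ((mem_localGroup_iff.1 hτ0U).2 z hc)
      obtain ⟨j0, hj0⟩ : ∃ j, z.1 j ≠ x.1 j := by
        by_contra hc; push_neg at hc; exact hzx (Subtype.ext (funext hc))
      -- cylinder at x moved off itself by ξ
      obtain ⟨mx0, hmx1, hmx2⟩ := sep_cyl hU hx hne
      have hjmx : j0 + 1 ≤ max mx0 (j0+1) := le_max_right _ _
      have hmxsub : cyl x (max mx0 (j0+1)) ⊆ U := (cyl_mono (le_max_left _ _)).trans hmx1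
      have hmxout : ∀ w ∈ cyl x (max mx0 (j0+1)), ξ w ∉ cyl x (max mx0 (j0+1)) :=
        fun w hw hc => hmx2 w (cyl_mono (le_max_left _ _) hw) (cyl_mono (le_max_left _ _) hc)
      set mx := max mx0 (j0+1) with hmxdef
      -- cylinder at z moved off itself by τ0
      obtain ⟨kz0, hkz1, hkz2⟩ := sep_cyl hU hzU hτz
      have hjkz : j0 + 1 ≤ max kz0 (j0+1) := le_max_right _ _
      have hkzsub : cyl z (max kz0 (j0+1)) ⊆ U := (cyl_mono (le_max_left _ _)).trans hkz1
      set kz := max kz0 (j0+1) with hkzdef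
      have hdisj0 : ∀ w ∈ cyl x mx, w ∉ cyl z kz := by
        intro w hw hc
        exact hj0 ((hc j0 (by omega)).symm.trans (hw j0 (by omega)))
      -- transport z into the cylinder at x
      obtain ⟨hmov, hhΓ, hhsupp, hhz⟩ := transport' hA x z mx kz (by omega) (by omega) hdisj0
      have hhU : hmov ∈ localGroup A U :=
        ⟨hhΓ, fun w hw => by
          by_contra hne2
          rcases hhsupp w hne2 with hc | hc
          · exact hw (hmxsub hc)
          · exact hw (hkzsub hc)⟩
      have hρM : hmov * τ0 * hmov⁻¹ ∈ M := hnorm hmov hhU τ0 hτ0M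
      set ρ := hmov * τ0 * hmov⁻¹ with hρdef
      set z1 := hmov z with hz1def
      have hz1C : z1 ∈ cyl x mx := hhz
      have hρz1 : ρ z1 ≠ z1 := by
        show hmov (τ0 (hmov⁻¹ (hmov z))) ≠ hmov z
        rw [inv_apply_apply]
        exact fun he => hτz (hmov.injective he)
      -- W1 := cyl z1 k1 inside cyl x mx, moved off itself by ρ
      obtain ⟨k1, hk11, hk12⟩ := sep_cyl (isClopen_cyl x mx).2 hz1C hρz1
      obtain ⟨g, hgΓ, hgsupp, hgz1⟩ := localMove hA hI z1 k1
      -- W2 := cyl z1 k2 inside W1, moved off itself by g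
      obtain ⟨k2, hk21, hk22⟩ := sep_cyl (isClopen_cyl z1 k1).2 (mem_cyl_self z1 k1) hgz1
      obtain ⟨q, hqΓ, hqsupp, hqz1⟩ := localMove hA hI z1 k2
      have hgU : g ∈ localGroup A U :=
        ⟨hgΓ, fun w hw => by
          by_contra hne2; exact hw (hmxsub (hk11 (hgsupp w hne2)))⟩
      have hqU : q ∈ localGroup A U :=
        ⟨hqΓ, fun w hw => by
          by_contra hne2; exact hw (hmxsub (hk11 (hk21 (hqsupp w hne2))))⟩
      have hτ2M : g * ρ * g⁻¹ * ρ⁻¹ ∈ M :=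
        M.mul_mem (hnorm g hgU ρ hρM) (M.inv_mem hρM)
      set τ2 := g * ρ * g⁻¹ * ρ⁻¹ with hτ2def
      have hgW1 : ∀ w ∈ cyl z1 k1, g w ∈ cyl z1 k1 := fun w hw =>
        maps_mem (fun v hv => by by_contra hc; exact hv (hgsupp v hc)) hw
      have hτ2W1 : ∀ w ∈ cyl z1 k1, τ2 w = g w := by
        intro w hw
        have h1 : ρ⁻¹ w ∉ cyl z1 k1 := by
          intro hc
          have h2 := hk12 _ hc
          rw [apply_inv_apply] at h2
          exact h2 hw
        have h2 : g⁻¹ (ρ⁻¹ w) = ρ⁻¹ w := fix_inv (by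
          by_contra hc
          exact h1 (hgsupp _ hc))
        show g (ρ (g⁻¹ (ρ⁻¹ w))) = g w
        rw [h2, apply_inv_apply]
      have hτ3M : q * τ2 * q⁻¹ * τ2⁻¹ ∈ M :=
        M.mul_mem (hnorm q hqU τ2 hτ2M) (M.inv_mem hτ2M)
      set τ3 := q * τ2 * q⁻¹ * τ2⁻¹ with hτ3def
      -- support of τ3 is inside cyl x mx
      have hτ3supp : ∀ w, τ3 w ≠ w → w ∈ cyl x mx := by
        intro w hw
        by_contra hwC
        refine hw ?_
        have hw2 : w ∉ cyl z1 k2 := fun hc => hwC (hk11 (hk21 hc))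
        have hu : τ2⁻¹ w ∉ cyl z1 k2 := by
          intro hc
          have e := hτ2W1 _ (hk21 hc)
          have e2 : τ2 (τ2⁻¹ w) = w := apply_inv_apply τ2 w
          have hgw : g (τ2⁻¹ w) ∈ cyl z1 k1 := hgW1 _ (hk21 hc)
          rw [← e, e2] at hgw
          exact hwC (hk11 hgw)
        have h2 : q⁻¹ (τ2⁻¹ w) = τ2⁻¹ w := fix_inv (by
          by_contra hc2
          exact hu (hqsupp _ hc2))
        show q (τ2 (q⁻¹ (τ2⁻¹ w))) = w
        rw [h2, apply_inv_apply]
        by_contra hc2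
        exact hw2 (hqsupp _ hc2)
      -- τ3 moves z1
      have hτ3z1 : τ3 z1 ≠ z1 := by
        have hz1W2 : z1 ∈ cyl z1 k2 := mem_cyl_self z1 k2
        have hu : τ2⁻¹ z1 ∉ cyl z1 k2 := by
          intro hc
          have e := hτ2W1 _ (hk21 hc)
          have e2 : τ2 (τ2⁻¹ z1) = z1 := apply_inv_apply τ2 z1
          have h3 := hk22 _ hc
          rw [← e, e2] at h3
          exact h3 hz1W2
        have h2 : q⁻¹ (τ2⁻¹ z1) = τ2⁻¹ z1 := fix_inv (by
          by_contra hc2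
          exact hu (hqsupp _ hc2))
        show q (τ2 (q⁻¹ (τ2⁻¹ z1))) ≠ z1
        rw [h2, apply_inv_apply]
        exact hqz1
      -- contradiction with commutation
      have hcommτ3 := hcomm τ3 (SetLike.mem_coe.2 hτ3M)
      have hinv2 := homeo_mul_eq_apply hcommτ3 z1
      have hmoved : τ3 (ξ z1) ≠ ξ z1 := by
        rw [← hinv2]
        exact fun hc => hτ3z1 (ξ.injective hc)
      exact hmxout z1 hz1C (hτ3supp _ hmoved)
    have hcl : closure U ⊆ {w | ξ w = w} :=
      closure_minimal hfix (isClosed_eq ξ.continuous continuous_id)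
    exact ⟨hξΓ, fun w hw => hcl (by simpa using hw)⟩
  · rintro ⟨hξΓ, hfix⟩
    refine ⟨hξΓ, fun γ hγ => ?_⟩
    have hγU := hMU (SetLike.mem_coe.1 hγ)
    exact commute_of_disjoint (mem_localGroup_iff.1 hγU).2 hfix
      (fun v hv hvc => hvc (subset_closure hv))

end ShiftAux
end Aux

theorem stmt8 {N : ℕ} (hN : 1 < N) (A : Fin N → Fin N → Bool)
    (hA : MatrixIrreducible A) (hI : ConditionI A)
    (O : Set (ShiftSpace A)) (hO : IsOpen O) (hreg : interior (closure O) = O) :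
    IsStrongCommutingPair A (localGroup A O) (localGroup A ((closure O)ᶜ)) := by
  have hO' : IsOpen ((closure O)ᶜ) := isClosed_closure.isOpen_compl
  refine ⟨fun γ hγ => (ShiftAux.mem_localGroup_iff.1 hγ).1,
    fun γ hγ => (ShiftAux.mem_localGroup_iff.1 hγ).1, ?_, ?_, ?_, ?_, ?_⟩
  · exact ShiftAux.commutant_localGroup hA hI hO
  · have h := ShiftAux.commutant_localGroup hA hI hO'
    rwa [closure_compl, hreg, compl_compl] at h
  · rw [eq_bot_iff]
    intro γ hγ
    obtain ⟨hγ1, hγ2⟩ := Subgroup.mem_inf.1 hγ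
    have hfix1 := (ShiftAux.mem_localGroup_iff.1 hγ1).2
    have hfix2 := (ShiftAux.mem_localGroup_iff.1 hγ2).2
    have hγid : γ = 1 := Homeomorph.ext fun w => by
      by_cases hw : w ∈ O
      · exact hfix2 w fun hc => hc (subset_closure hw)
      · exact hfix1 w hw
    rw [Subgroup.mem_bot]
    exact hγid
  · intro M hMle hMbot hnorm
    exact ShiftAux.strong_commutant hA hI hO M hMle hMbot hnorm
  · intro M hMle hMbot hnorm
    have h := ShiftAux.strong_commutant hA hI hO' M hMle hMbot hnorm
    rwa [closure_compl, hreg, compl_compl] at h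
end

section
/- For a word ν of length n > 1 admissible in X_A and a nonempty open set V ⊆ X_A not contained in the cylinder U_ν, there exists α ∈ Γ_A with α(U_ν) ⊆ V, α² = id, and α equal to the identity outside U_ν ∪ α(U_ν). -/
/-!
Pick `z ∈ V \ U_ν` and `m ≥ n` such that the cylinder of the first `m` symbols of `z` lies in
`V`. Irreducibility gives a path `w` from `z_m` to `ν₀`, so the word
`u = z₀ ⋯ z_{m-1} w₀ ⋯ w_{p-1}` of length `L = m + p` can be prepended to every point of `U_ν`.
Let `α` prepend `u` on `U_ν`, apply `σ^L` on `C = u U_ν` and fix everything else. The sets `U_ν`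
and `C` are clopen and disjoint (`z` and `ν` already differ before `n ≤ m`), so `α` is a
continuous involution, and its cocycles take the constant values `L` or `0` on clopen pieces,
so `α ∈ Γ_A`.
-/


open Set

open Function Filter

theorem IsClopen.continuous_piecewise {X Y : Type*} [TopologicalSpace X] [TopologicalSpace Y]
    {s : Set X} [∀ x, Decidable (x ∈ s)] {f g : X → Y} (hs : IsClopen s) (hf : Continuous f)
    (hg : Continuous g) : Continuous (s.piecewise f g) :=
  hf.piecewise (by simp [hs.frontier_eq]) hg

theorem PiNat.isClopen_cylinder {E : ℕ → Type*} [∀ n, TopologicalSpace (E n)]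
    [∀ n, DiscreteTopology (E n)] (x : ∀ n, E n) (n : ℕ) : IsClopen (PiNat.cylinder x n) :=
  ⟨PiNat.cylinder_eq_pi x n ▸ isClosed_set_pi fun _ _ => isClosed_discrete _,
    PiNat.isOpen_cylinder E x n⟩

section PiecewiseSwap

variable {X : Type*} {U C : Set X} {p q : X → X}

open scoped Classical in
noncomputable def piecewiseSwap (U C : Set X) (p q : X → X) : X → X :=
  U.piecewise p (C.piecewise q id)

theorem piecewiseSwap_of_mem_left {x : X} (hx : x ∈ U) : piecewiseSwap U C p q x = p x := by
  simp [piecewiseSwap, hx]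

theorem piecewiseSwap_of_mem_right (hUC : Disjoint U C) {y : X} (hy : y ∈ C) :
    piecewiseSwap U C p q y = q y := by
  simp [piecewiseSwap, hy, hUC.notMem_of_mem_right hy]

theorem piecewiseSwap_of_notMem {x : X} (hx : x ∉ U ∪ C) : piecewiseSwap U C p q x = x := by
  simp_all [piecewiseSwap]

theorem piecewiseSwap_involutive (hUC : Disjoint U C) (hpUC : MapsTo p U C)
    (hqCU : MapsTo q C U) (hinv : InvOn q p U C) : Involutive (piecewiseSwap U C p q) := by
  intro x
  by_cases hxU : x ∈ U
  · rw [piecewiseSwap_of_mem_left hxU, piecewiseSwap_of_mem_right hUC (hpUC hxU), hinv.1 hxU]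
  by_cases hxC : x ∈ C
  · rw [piecewiseSwap_of_mem_right hUC hxC, piecewiseSwap_of_mem_left (hqCU hxC), hinv.2 hxC]
  · have hx : x ∉ U ∪ C := by simp [hxU, hxC]
    rw [piecewiseSwap_of_notMem hx, piecewiseSwap_of_notMem hx]

theorem image_piecewiseSwap (hpUC : MapsTo p U C) (hqCU : MapsTo q C U)
    (hinv : InvOn q p U C) : piecewiseSwap U C p q '' U = C := by
  rw [EqOn.image_eq fun _ => piecewiseSwap_of_mem_left]
  exact (hinv.bijOn hpUC hqCU).image_eq

open scoped Classical in
theorem continuous_piecewiseSwap [TopologicalSpace X] (hU : IsClopen U) (hC : IsClopen C)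
    (hp : Continuous p) (hq : Continuous q) : Continuous (piecewiseSwap U C p q) :=
  hU.continuous_piecewise hp (hC.continuous_piecewise hq continuous_id)

end PiecewiseSwap

section PrependSeq

variable {α : Type*}

def prependSeq (L : ℕ) (u v : ℕ → α) : ℕ → α := fun i => if i < L then u i else v (i - L)

theorem prependSeq_of_lt {L i : ℕ} (u v : ℕ → α) (h : i < L) : prependSeq L u v i = u i :=
  if_pos h

theorem prependSeq_of_le {L i : ℕ} (u v : ℕ → α) (h : L ≤ i) :
    prependSeq L u v i = v (i - L) :=
  if_neg (not_lt.2 h)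

theorem prependSeq_add (L i : ℕ) (u v : ℕ → α) : prependSeq L u v (i + L) = v i := by
  rw [prependSeq_of_le _ _ (Nat.le_add_left L i), Nat.add_sub_cancel]

theorem prependSeq_mem_cylinder (L : ℕ) (u v : ℕ → α) : prependSeq L u v ∈ PiNat.cylinder u L :=
  fun _ => prependSeq_of_lt u v

theorem prependSeq_drop {L : ℕ} {u y : ℕ → α} (hy : y ∈ PiNat.cylinder u L) :
    prependSeq L u (fun i => y (i + L)) = y := by
  funext i
  by_cases hi : i < L
  · rw [prependSeq_of_lt _ _ hi, hy i hi]
  · rw [prependSeq_of_le _ _ (not_lt.1 hi), Nat.sub_add_cancel (not_lt.1 hi)]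

theorem continuous_prependSeq [TopologicalSpace α] (L : ℕ) (u : ℕ → α) :
    Continuous (prependSeq L u) :=
  continuous_pi fun i => by
    by_cases hi : i < L
    · simpa [prependSeq, hi] using continuous_const
    · simpa [prependSeq, hi] using continuous_apply (i - L)

end PrependSeq

variable {N : ℕ} {A : Fin N → Fin N → Bool}

/-- `u 0, u 1, …, u L` is a path of `L` steps in the graph of `A` (an admissible word of
length `L + 1`). -/
def IsAdmissiblePath (A : Fin N → Fin N → Bool) (u : ℕ → Fin N) (L : ℕ) : Prop :=
  ∀ i < L, A (u i) (u (i + 1)) = true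

theorem IsAdmissiblePath.append {u v : ℕ → Fin N} {L K : ℕ} (hu : IsAdmissiblePath A u L)
    (hv : IsAdmissiblePath A v K) (h : u L = v 0) :
    IsAdmissiblePath A (prependSeq L u v) (L + K) := by
  intro i hi
  rcases lt_trichotomy (i + 1) L with hlt | heq | hgt
  · rw [prependSeq_of_lt _ _ hlt, prependSeq_of_lt _ _ (by omega)]
    exact hu i (by omega)
  · rw [prependSeq_of_lt _ _ (by omega), prependSeq_of_le _ _ heq.ge, heq, Nat.sub_self, ← h,
      ← heq]
    exact hu i (by omega)
  · rw [prependSeq_of_le _ _ (by omega), prependSeq_of_le _ _ (by omega),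
      show i + 1 - L = i - L + 1 by omega]
    exact hv (i - L) (by omega)

theorem isAdmissiblePath_val (x : ShiftSpace A) (L : ℕ) : IsAdmissiblePath A x.1 L :=
  fun i _ => x.2 i

theorem iterate_shiftMap_val (k : ℕ) (x : ShiftSpace A) :
    ((shiftMap A)^[k] x).1 = fun i => x.1 (i + k) := by
  induction k generalizing x with
  | zero => rfl
  | succ k ih =>
    rw [iterate_succ_apply, ih]
    rfl

theorem continuous_shiftMap : Continuous (shiftMap A) :=
  continuous_induced_rng.2 <|
    continuous_pi fun i => (continuous_apply (i + 1)).comp continuous_subtype_val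

theorem isClopen_setOf_val_eq (i : ℕ) (a : Fin N) : IsClopen {x : ShiftSpace A | x.1 i = a} :=
  (isClopen_discrete {a}).preimage ((continuous_apply i).comp continuous_subtype_val)

theorem eventually_cylinder_subset {V : Set (ShiftSpace A)} (hV : IsOpen V) {z : ShiftSpace A}
    (hz : z ∈ V) : ∀ᶠ m in atTop, Subtype.val ⁻¹' PiNat.cylinder z.1 m ⊆ V := by
  obtain ⟨W, hW, rfl⟩ := isOpen_induced_iff.1 hV
  obtain ⟨_, ⟨y, m, rfl⟩, hzy, hyW⟩ :=
    (PiNat.isTopologicalBasis_cylinders _).exists_subset_of_mem_open hz hW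
  rw [← PiNat.mem_cylinder_iff_eq.1 hzy] at hyW
  exact eventually_atTop.2 ⟨m, fun k hk => preimage_mono ((PiNat.cylinder_anti _ hk).trans hyW)⟩

section PrependOn

variable {U : Set (ShiftSpace A)} {u : ℕ → Fin N} {L : ℕ}

open scoped Classical in
noncomputable def prependOn (U : Set (ShiftSpace A)) (hu : IsAdmissiblePath A u L)
    (hU : ∀ x ∈ U, x.1 0 = u L) (x : ShiftSpace A) : ShiftSpace A :=
  ⟨U.piecewise (fun y => prependSeq L u y.1) Subtype.val x, fun i => by
    by_cases hx : x ∈ U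
    · simp only [piecewise_eq_of_mem _ _ _ hx]
      exact (hu.append (isAdmissiblePath_val x (i + 1)) (hU x hx).symm) i (by omega)
    · simp only [piecewise_eq_of_notMem _ _ _ hx]
      exact x.2 i⟩

variable {hu : IsAdmissiblePath A u L} {hU : ∀ x ∈ U, x.1 0 = u L}

theorem prependOn_val_of_mem {x : ShiftSpace A} (hx : x ∈ U) :
    (prependOn U hu hU x).1 = prependSeq L u x.1 := by
  simp [prependOn, hx]

open scoped Classical in
theorem continuous_prependOn (hUc : IsClopen U) : Continuous (prependOn U hu hU) :=
  (hUc.continuous_piecewise ((continuous_prependSeq L u).comp continuous_subtype_val)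
    continuous_subtype_val).subtype_mk _

theorem iterate_shiftMap_prependOn {x : ShiftSpace A} (hx : x ∈ U) :
    (shiftMap A)^[L] (prependOn U hu hU x) = x := by
  ext1
  rw [iterate_shiftMap_val, prependOn_val_of_mem hx]
  exact funext fun i => prependSeq_add L i u x.1

theorem prependOn_iterate_shiftMap {y : ShiftSpace A} (hy : y.1 ∈ PiNat.cylinder u L)
    (hyU : (shiftMap A)^[L] y ∈ U) : prependOn U hu hU ((shiftMap A)^[L] y) = y := by
  ext1
  rw [prependOn_val_of_mem hyU, iterate_shiftMap_val, prependSeq_drop hy]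

end PrependOn

theorem mem_fullGroup_of_eqOn_iterate {α : ShiftSpace A ≃ₜ ShiftSpace A}
    {U C : Set (ShiftSpace A)} {L : ℕ} (hU : IsClopen U) (hC : IsClopen C) (hUC : Disjoint U C)
    (hαU : ∀ x ∈ U, (shiftMap A)^[L] (α x) = x) (hαC : EqOn α ((shiftMap A)^[L]) C)
    (hα : ∀ x ∉ U ∪ C, α x = x) : α ∈ fullGroup A := by
  classical
  refine ⟨U.piecewise (fun _ => L) (fun _ => 0), C.piecewise (fun _ => L) (fun _ => 0),
    hU.continuous_piecewise continuous_const continuous_const,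
    hC.continuous_piecewise continuous_const continuous_const, fun x => ?_⟩
  by_cases hxU : x ∈ U
  · simp [hxU, hUC.notMem_of_mem_left hxU, hαU x hxU]
  by_cases hxC : x ∈ C
  · simp [hxU, hxC, hαC hxC]
  · simp [hxU, hxC, hα x (by simp [hxU, hxC])]

theorem exists_involution_image_subset_cylinder {U : Set (ShiftSpace A)} {u : ℕ → Fin N}
    {L : ℕ} (hUc : IsClopen U) (hu : IsAdmissiblePath A u L) (hU : ∀ x ∈ U, x.1 0 = u L)
    (hdisj : Disjoint U (Subtype.val ⁻¹' PiNat.cylinder u L)) :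
    ∃ α ∈ fullGroup A, α '' U ⊆ Subtype.val ⁻¹' PiNat.cylinder u L ∧ α * α = 1 ∧
      ∀ x ∉ U ∪ α '' U, α x = x := by
  set C := Subtype.val ⁻¹' PiNat.cylinder u L ∩ (shiftMap A)^[L] ⁻¹' U
  set p := prependOn U hu hU
  have hCc : IsClopen C := ((PiNat.isClopen_cylinder u L).preimage continuous_subtype_val).inter
    (hUc.preimage (continuous_shiftMap.iterate L))
  have hUC : Disjoint U C := hdisj.mono_right inter_subset_left
  have hpUC : MapsTo p U C := fun x hx => by
    refine ⟨?_, ?_⟩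
    · show (p x).1 ∈ PiNat.cylinder u L
      rw [prependOn_val_of_mem hx]
      exact prependSeq_mem_cylinder L u x.1
    · show (shiftMap A)^[L] (p x) ∈ U
      rwa [iterate_shiftMap_prependOn hx]
  have hinv : InvOn ((shiftMap A)^[L]) p U C :=
    ⟨fun _ hx => iterate_shiftMap_prependOn hx, fun _ hy => prependOn_iterate_shiftMap hy.1 hy.2⟩
  have hswap := piecewiseSwap_involutive hUC hpUC (fun _ hy => hy.2) hinv
  have hp : Continuous p := continuous_prependOn hUc
  have hcont := continuous_piecewiseSwap hUc hCc hp (continuous_shiftMap.iterate L)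
  let α : ShiftSpace A ≃ₜ ShiftSpace A := ⟨hswap.toPerm, hcont, hcont⟩
  have himage : α '' U = C := image_piecewiseSwap hpUC (fun _ hy => hy.2) hinv
  have hαU : ∀ x ∈ U, (shiftMap A)^[L] (α x) = x := fun x hx =>
    (congrArg _ (piecewiseSwap_of_mem_left hx)).trans (hinv.1 hx)
  have hαC : EqOn α ((shiftMap A)^[L]) C := fun _ hy => piecewiseSwap_of_mem_right hUC hy
  have hαfix : ∀ x ∉ U ∪ C, α x = x := fun _ hx => piecewiseSwap_of_notMem hx
  exact ⟨α, mem_fullGroup_of_eqOn_iterate hUc hCc hUC hαU hαC hαfix,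
    himage ▸ inter_subset_left, Homeomorph.ext hswap, fun x hx => hαfix x (himage ▸ hx)⟩

theorem stmt9_general {N : ℕ} (A : Fin N → Fin N → Bool)
    (hA : MatrixIrreducible A)
    (n : ℕ) (hn : 1 < n) (ν : Fin n → Fin N)
    (V : Set (ShiftSpace A)) (hV : IsOpen V)
    (hVν : ¬ V ⊆ {x : ShiftSpace A | ∀ i : Fin n, x.1 i = ν i}) :
    ∃ α ∈ fullGroup A,
      α '' {x : ShiftSpace A | ∀ i : Fin n, x.1 i = ν i} ⊆ V ∧ α * α = 1 ∧
      ∀ x ∉ {x : ShiftSpace A | ∀ i : Fin n, x.1 i = ν i} ∪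
          α '' {x : ShiftSpace A | ∀ i : Fin n, x.1 i = ν i}, α x = x := by
  set Uν := {x : ShiftSpace A | ∀ i : Fin n, x.1 i = ν i}
  obtain ⟨z, hzV, hzν⟩ := not_subset.1 hVν
  obtain ⟨i₀, hi₀⟩ := not_forall.1 hzν
  obtain ⟨m, hmV, hnm⟩ := ((eventually_cylinder_subset hV hzV).and (eventually_ge_atTop n)).exists
  obtain ⟨p, -, w, hw0, hwp, hw⟩ := hA (z.1 m) (ν ⟨0, by omega⟩)
  set u := prependSeq m z.1 w
  have hcyl : PiNat.cylinder u (m + p) ⊆ PiNat.cylinder z.1 m :=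
    fun y hy i hi => (hy i (by omega)).trans (prependSeq_mem_cylinder m z.1 w i hi)
  have hUν : IsClopen Uν := by
    simp only [Uν, ofPred_forall]
    exact isClopen_iInter_of_finite fun i => isClopen_setOf_val_eq _ _
  have hjoin : ∀ x ∈ Uν, x.1 0 = u (m + p) := fun x hx => by
    rw [hx ⟨0, by omega⟩, ← hwp, add_comm]
    exact (prependSeq_add m p z.1 w).symm
  have hdisj : Disjoint Uν (Subtype.val ⁻¹' PiNat.cylinder u (m + p)) :=
    disjoint_left.2 fun y hyν hyu => hi₀ ((hcyl hyu i₀ (by omega)).symm.trans (hyν i₀))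
  obtain ⟨α, hα, himage, hinv, hfix⟩ := exists_involution_image_subset_cylinder hUν
    ((isAdmissiblePath_val z m).append hw hw0.symm) hjoin hdisj
  exact ⟨α, hα, himage.trans ((preimage_mono hcyl).trans hmV), hinv, hfix⟩

theorem stmt9 {N : ℕ} (hN : 1 < N) (A : Fin N → Fin N → Bool)
    (hA : MatrixIrreducible A) (hI : ConditionI A)
    (n : ℕ) (hn : 1 < n) (ν : Fin n → Fin N)
    (hadm : ∃ x : ShiftSpace A, ∃ m : ℕ, ∀ i : Fin n, x.1 (m + i) = ν i)
    (V : Set (ShiftSpace A)) (hV : IsOpen V) (hVne : V.Nonempty)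
    (hVν : ¬ V ⊆ {x : ShiftSpace A | ∀ i : Fin n, x.1 i = ν i}) :
    ∃ α ∈ fullGroup A,
      α '' {x : ShiftSpace A | ∀ i : Fin n, x.1 i = ν i} ⊆ V ∧ α * α = 1 ∧
      ∀ x ∉ {x : ShiftSpace A | ∀ i : Fin n, x.1 i = ν i} ∪
          α '' {x : ShiftSpace A | ∀ i : Fin n, x.1 i = ν i}, α x = x :=
  stmt9_general A hA n hn ν V hV hVν
end
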